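/- arXiv:2206.05551 — 8 statements merged into one kernel-verified Lean document; each statement's English description precedes it below -/
import Mathlib

section
/- Let φ = {φ_n} and ψ = {ψ_n} be Bessel sequences in a separable Hilbert space H with Bessel bounds B_φ and B_ψ respectively, and let m = {m_n} be a bounded complex sequence. Then for every f ∈ H the series Σ_n m_n ⟨f, ψ_n⟩ φ_n converges in H, the resulting operator M_{m,φ,ψ} is a bounded linear operator, and ‖M_{m,φ,ψ}‖ ≤ (sup_n |m_n|) · B_φ^{1/2} · B_ψ^{1/2}. -/
open scoped InnerProductSpace

section BesselAux

variable {H : Type*} [NormedAddCommGroup H] [InnerProductSpace ℂ H] [CompleteSpace H]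

omit [CompleteSpace H] in
/-- Finite synthesis bound for a Bessel sequence. -/
lemma bessel_finset_norm_le
    (φ : ℕ → H) (Bφ : ℝ) (hBφ : 0 ≤ Bφ)
    (hφ : ∀ f : H, ∃ s : ℝ, HasSum (fun n => ‖⟪φ n, f⟫_ℂ‖ ^ 2) s ∧ s ≤ Bφ * ‖f‖ ^ 2)
    (c : ℕ → ℂ) (F : Finset ℕ) :
    ‖∑ n ∈ F, c n • φ n‖ ≤ Real.sqrt Bφ * Real.sqrt (∑ n ∈ F, ‖c n‖ ^ 2) := by
  set v := ∑ n ∈ F, c n • φ n with hv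
  obtain ⟨s, hs, hsle⟩ := hφ v
  have hinner : ∑ n ∈ F, ‖⟪φ n, v⟫_ℂ‖ ^ 2 ≤ Bφ * ‖v‖ ^ 2 :=
    le_trans (sum_le_hasSum F (fun n _ => by positivity) hs) hsle
  have hcs : ∑ n ∈ F, ‖c n‖ * ‖⟪v, φ n⟫_ℂ‖ ≤
      Real.sqrt (∑ n ∈ F, ‖c n‖ ^ 2) * Real.sqrt (∑ n ∈ F, ‖⟪v, φ n⟫_ℂ‖ ^ 2) := by
    have h := Finset.sum_mul_sq_le_sq_mul_sq F (fun n => ‖c n‖) (fun n => ‖⟪v, φ n⟫_ℂ‖)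
    have h0 : (0:ℝ) ≤ ∑ n ∈ F, ‖c n‖ * ‖⟪v, φ n⟫_ℂ‖ :=
      Finset.sum_nonneg fun n _ => by positivity
    calc ∑ n ∈ F, ‖c n‖ * ‖⟪v, φ n⟫_ℂ‖
        = Real.sqrt ((∑ n ∈ F, ‖c n‖ * ‖⟪v, φ n⟫_ℂ‖) ^ 2) := (Real.sqrt_sq h0).symm
      _ ≤ Real.sqrt ((∑ n ∈ F, ‖c n‖ ^ 2) * ∑ n ∈ F, ‖⟪v, φ n⟫_ℂ‖ ^ 2) :=
          Real.sqrt_le_sqrt h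
      _ = _ := Real.sqrt_mul (Finset.sum_nonneg fun n _ => by positivity) _
  have hnormsq : ‖v‖ ^ 2 ≤ ∑ n ∈ F, ‖c n‖ * ‖⟪v, φ n⟫_ℂ‖ := by
    have h1 : (⟪v, v⟫_ℂ) = ∑ n ∈ F, c n * ⟪v, φ n⟫_ℂ := by
      rw [hv]
      rw [inner_sum]
      exact Finset.sum_congr rfl fun n _ => inner_smul_right _ _ _
    have h2 : ‖v‖ ^ 2 = ‖(⟪v, v⟫_ℂ)‖ := by
      rw [inner_self_eq_norm_sq_to_K (𝕜 := ℂ) v]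
      simp
    rw [h2, h1]
    refine le_trans (norm_sum_le _ _) (le_of_eq ?_)
    exact Finset.sum_congr rfl fun n _ => norm_mul _ _
  have hsym : ∑ n ∈ F, ‖⟪v, φ n⟫_ℂ‖ ^ 2 ≤ Bφ * ‖v‖ ^ 2 := by
    refine le_trans (le_of_eq ?_) hinner
    exact Finset.sum_congr rfl fun n _ => by rw [norm_inner_symm]
  have key : ‖v‖ ^ 2 ≤ Real.sqrt (∑ n ∈ F, ‖c n‖ ^ 2) * (Real.sqrt Bφ * ‖v‖) := by
    refine le_trans hnormsq (le_trans hcs ?_)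
    gcongr
    calc Real.sqrt (∑ n ∈ F, ‖⟪v, φ n⟫_ℂ‖ ^ 2) ≤ Real.sqrt (Bφ * ‖v‖ ^ 2) :=
          Real.sqrt_le_sqrt hsym
      _ = Real.sqrt Bφ * ‖v‖ := by
          rw [Real.sqrt_mul hBφ, Real.sqrt_sq (norm_nonneg v)]
  rcases eq_or_lt_of_le (norm_nonneg v) with h0 | h0
  · rw [← h0]; positivity
  · have := key
    rw [pow_two] at this
    have h' : ‖v‖ * ‖v‖ ≤ (Real.sqrt Bφ * Real.sqrt (∑ n ∈ F, ‖c n‖ ^ 2)) * ‖v‖ := by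
      calc ‖v‖ * ‖v‖ ≤ Real.sqrt (∑ n ∈ F, ‖c n‖ ^ 2) * (Real.sqrt Bφ * ‖v‖) := this
        _ = (Real.sqrt Bφ * Real.sqrt (∑ n ∈ F, ‖c n‖ ^ 2)) * ‖v‖ := by ring
    exact le_of_mul_le_mul_right h' h0

/-- Synthesis of an ℓ² sequence against a Bessel sequence converges. -/
lemma bessel_summable
    (φ : ℕ → H) (Bφ : ℝ) (hBφ : 0 < Bφ)
    (hφ : ∀ f : H, ∃ s : ℝ, HasSum (fun n => ‖⟪φ n, f⟫_ℂ‖ ^ 2) s ∧ s ≤ Bφ * ‖f‖ ^ 2)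
    (c : ℕ → ℂ) (hc : Summable fun n => ‖c n‖ ^ 2) :
    Summable fun n => c n • φ n := by
  rw [summable_iff_cauchySeq_finset, cauchySeq_finset_iff_vanishing_norm]
  intro ε hε
  have hε' : (0:ℝ) < (ε / Real.sqrt Bφ) ^ 2 := by
    have : (0:ℝ) < Real.sqrt Bφ := Real.sqrt_pos.mpr hBφ
    positivity
  obtain ⟨s, hs⟩ := (summable_iff_cauchySeq_finset.mp hc |> cauchySeq_finset_iff_vanishing_norm.mp)
    _ hε'
  refine ⟨s, fun t ht => ?_⟩
  have h1 : ‖∑ n ∈ t, c n • φ n‖ ≤ Real.sqrt Bφ * Real.sqrt (∑ n ∈ t, ‖c n‖ ^ 2) :=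
    bessel_finset_norm_le φ Bφ hBφ.le hφ c t
  have h2 : ∑ n ∈ t, ‖c n‖ ^ 2 < (ε / Real.sqrt Bφ) ^ 2 := by
    have := hs t ht
    rwa [Real.norm_eq_abs, abs_of_nonneg (Finset.sum_nonneg fun n _ => by positivity)] at this
  have hsB : (0:ℝ) < Real.sqrt Bφ := Real.sqrt_pos.mpr hBφ
  calc ‖∑ n ∈ t, c n • φ n‖ ≤ Real.sqrt Bφ * Real.sqrt (∑ n ∈ t, ‖c n‖ ^ 2) := h1
    _ < Real.sqrt Bφ * (ε / Real.sqrt Bφ) := by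
        gcongr
        calc Real.sqrt (∑ n ∈ t, ‖c n‖ ^ 2) < Real.sqrt ((ε / Real.sqrt Bφ) ^ 2) :=
              (Real.sqrt_lt_sqrt (Finset.sum_nonneg fun n _ => by positivity) h2)
          _ = ε / Real.sqrt Bφ := Real.sqrt_sq (by positivity)
    _ = ε := by field_simp

omit [CompleteSpace H] in
/-- Norm bound for the synthesized vector. -/
lemma bessel_tsum_norm_le
    (φ : ℕ → H) (Bφ : ℝ) (hBφ : 0 < Bφ)
    (hφ : ∀ f : H, ∃ s : ℝ, HasSum (fun n => ‖⟪φ n, f⟫_ℂ‖ ^ 2) s ∧ s ≤ Bφ * ‖f‖ ^ 2)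
    (c : ℕ → ℂ) (hc : Summable fun n => ‖c n‖ ^ 2)
    {a : H} (ha : HasSum (fun n => c n • φ n) a) :
    ‖a‖ ≤ Real.sqrt Bφ * Real.sqrt (∑' n, ‖c n‖ ^ 2) := by
  have htend : Filter.Tendsto (fun F : Finset ℕ => ‖∑ n ∈ F, c n • φ n‖)
      Filter.atTop (nhds ‖a‖) := (continuous_norm.continuousAt).tendsto.comp ha
  refine le_of_tendsto htend (Filter.Eventually.of_forall fun F => ?_)
  refine le_trans (bessel_finset_norm_le φ Bφ hBφ.le hφ c F) ?_
  gcongr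
  exact Summable.sum_le_tsum F (fun n _ => by positivity) hc

end BesselAux

/-- Bessel multipliers are well defined, bounded, with norm at most
`(sup |m n|) * Bφ^(1/2) * Bψ^(1/2)`. -/
theorem bessel_multiplier_exists_and_norm_le
    {H : Type*} [NormedAddCommGroup H] [InnerProductSpace ℂ H] [CompleteSpace H]
    (φ ψ : ℕ → H) (Bφ Bψ : ℝ) (hBφ : 0 < Bφ) (hBψ : 0 < Bψ)
    (hφ : ∀ f : H, ∃ s : ℝ, HasSum (fun n => ‖⟪φ n, f⟫_ℂ‖ ^ 2) s ∧ s ≤ Bφ * ‖f‖ ^ 2)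
    (hψ : ∀ f : H, ∃ s : ℝ, HasSum (fun n => ‖⟪ψ n, f⟫_ℂ‖ ^ 2) s ∧ s ≤ Bψ * ‖f‖ ^ 2)
    (m : ℕ → ℂ) (hm : BddAbove (Set.range fun n => ‖m n‖)) :
    ∃ M : H →L[ℂ] H,
      (∀ f : H, HasSum (fun n => (m n * ⟪ψ n, f⟫_ℂ) • φ n) (M f)) ∧
      ‖M‖ ≤ (⨆ n, ‖m n‖) * Real.sqrt Bφ * Real.sqrt Bψ := by
  set S := ⨆ n, ‖m n‖ with hS
  have hmS : ∀ n, ‖m n‖ ≤ S := fun n => le_ciSup hm n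
  have hS0 : 0 ≤ S := le_trans (norm_nonneg (m 0)) (hmS 0)
  -- coefficient sequence
  set c : H → ℕ → ℂ := fun f n => m n * ⟪ψ n, f⟫_ℂ with hc
  have hcsum : ∀ f : H, Summable fun n => ‖c f n‖ ^ 2 := by
    intro f
    obtain ⟨s, hs, _⟩ := hψ f
    refine Summable.of_nonneg_of_le (fun n => by positivity)
      (fun n => ?_) ((hs.summable).mul_left (S ^ 2))
    simp only [hc, norm_mul, mul_pow]
    gcongr
    exact hmS n
  have hctsum : ∀ f : H, ∑' n, ‖c f n‖ ^ 2 ≤ S ^ 2 * (Bψ * ‖f‖ ^ 2) := by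
    intro f
    obtain ⟨s, hs, hsle⟩ := hψ f
    calc ∑' n, ‖c f n‖ ^ 2 ≤ ∑' n, S ^ 2 * ‖⟪ψ n, f⟫_ℂ‖ ^ 2 := by
          refine Summable.tsum_le_tsum (fun n => ?_) (hcsum f) ((hs.summable).mul_left _)
          simp only [hc, norm_mul, mul_pow]
          gcongr
          exact hmS n
      _ = S ^ 2 * s := by rw [tsum_mul_left, hs.tsum_eq]
      _ ≤ S ^ 2 * (Bψ * ‖f‖ ^ 2) := by gcongr
  have hsummable : ∀ f : H, Summable fun n => c f n • φ n := fun f =>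
    bessel_summable φ Bφ hBφ hφ (c f) (hcsum f)
  have hbound : ∀ f : H, ‖∑' n, c f n • φ n‖ ≤ S * Real.sqrt Bφ * Real.sqrt Bψ * ‖f‖ := by
    intro f
    have h1 := bessel_tsum_norm_le φ Bφ hBφ hφ (c f) (hcsum f) (hsummable f).hasSum
    refine le_trans h1 ?_
    have h2 : Real.sqrt (∑' n, ‖c f n‖ ^ 2) ≤ S * Real.sqrt Bψ * ‖f‖ := by
      have : Real.sqrt (∑' n, ‖c f n‖ ^ 2) ≤ Real.sqrt (S ^ 2 * (Bψ * ‖f‖ ^ 2)) :=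
        Real.sqrt_le_sqrt (hctsum f)
      refine le_trans this (le_of_eq ?_)
      rw [Real.sqrt_mul (by positivity), Real.sqrt_mul hBψ.le,
        Real.sqrt_sq hS0, Real.sqrt_sq (norm_nonneg f)]
      ring
    calc Real.sqrt Bφ * Real.sqrt (∑' n, ‖c f n‖ ^ 2)
        ≤ Real.sqrt Bφ * (S * Real.sqrt Bψ * ‖f‖) := by gcongr
      _ = S * Real.sqrt Bφ * Real.sqrt Bψ * ‖f‖ := by ring
  -- linear map
  let T : H →ₗ[ℂ] H :=
    { toFun := fun f => ∑' n, c f n • φ n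
      map_add' := by
        intro f g
        have h1 := (hsummable f).hasSum
        have h2 := (hsummable g).hasSum
        have h3 : HasSum (fun n => c (f + g) n • φ n)
            ((∑' n, c f n • φ n) + ∑' n, c g n • φ n) := by
          have := h1.add h2
          convert this using 2 with n
          simp only [hc, inner_add_right, mul_add, add_smul]
        exact h3.tsum_eq
      map_smul' := by
        intro a f
        have h1 := (hsummable f).hasSum
        have h3 : HasSum (fun n => c (a • f) n • φ n) (a • ∑' n, c f n • φ n) := by
          have := h1.const_smul a
          convert this using 2 with n
          simp only [hc, inner_smul_right, smul_smul]
          ring_nf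
        exact h3.tsum_eq }
  refine ⟨T.mkContinuous (S * Real.sqrt Bφ * Real.sqrt Bψ) hbound, fun f => ?_, ?_⟩
  · exact (hsummable f).hasSum
  · exact T.mkContinuous_norm_le (by positivity) hbound
end

section
/- Let φ be a frame for H, ψ its canonical dual frame, and m ∈ ℓ^∞ a sequence of real numbers. Then the spectrum of M_{m,φ,ψ} is real, and is contained in the interval [inf_n m_n, sup_n m_n]. If moreover all m_n are nonnegative, the spectrum is contained in [0, sup_n m_n]. -/
/-!
Put `T := M S`, so that `T f = ∑ₙ mₙ ⟪φ n, f⟫ φ n`. Comparing weights termwise gives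
`(inf m) • S ≤ T ≤ (sup m) • S` as positive operators. Then `M = T S⁻¹` is similar, via
`S^{1/2}`, to the self-adjoint operator `S^{-1/2} T S^{-1/2}`, which lies between `inf m` and
`sup m`; so its spectrum is real and contained in `[inf m, sup m]`.
-/

open scoped InnerProductSpace

section CStar
variable {A : Type*} [CStarAlgebra A] [PartialOrder A] [StarOrderedRing A]

theorem spectrum_subset_image_ofReal_Icc {N : A} {a b : ℝ} (haN : algebraMap ℝ A a ≤ N)
    (hNb : N ≤ algebraMap ℝ A b) : spectrum ℂ N ⊆ Complex.ofReal '' Set.Icc a b := by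
  have hN : IsSelfAdjoint N := by
    simpa using (IsSelfAdjoint.of_nonneg (sub_nonneg.2 haN)).add (.algebraMap A (.all a))
  rw [← hN.spectrumRestricts.algebraMap_image]
  exact Set.image_mono fun x hx => ⟨(algebraMap_le_iff_le_spectrum hN).1 haN x hx,
    (le_algebraMap_iff_spectrum_le hN).1 hNb x hx⟩

theorem spectrum_mul_inv_subset_image_ofReal_Icc {S : Aˣ} (hS : 0 ≤ (S : A)) {T : A} {a b : ℝ}
    (haT : a • (S : A) ≤ T) (hTb : T ≤ b • (S : A)) :
    spectrum ℂ (T * ↑S⁻¹) ⊆ Complex.ofReal '' Set.Icc a b := by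
  obtain ⟨R, hR⟩ : IsUnit (CFC.sqrt (S : A)) := (CFC.isUnit_sqrt_iff _ hS).2 S.isUnit
  have hRR : R * R = S := Units.ext (by simp [hR, CFC.sqrt_mul_sqrt_self _ hS])
  have hRsa : IsSelfAdjoint (R : A) := hR ▸ IsSelfAdjoint.of_nonneg (CFC.sqrt_nonneg _)
  have hRinv : IsSelfAdjoint (↑R⁻¹ : A) := by
    rw [IsSelfAdjoint, ← Units.coe_star_inv, show star R = R from Units.ext hRsa]
  have hRSR : (↑R⁻¹ : A) * S * ↑R⁻¹ = 1 := by
    rw [← hRR]; simp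
  have hconj : T * ↑S⁻¹ = R * ((↑R⁻¹ : A) * T * ↑R⁻¹) * ↑R⁻¹ := by
    rw [← hRR]; simp [mul_assoc, mul_inv_rev]
  rw [hconj, spectrum.units_conjugate]
  refine spectrum_subset_image_ofReal_Icc ?_ ?_
  · simpa [Algebra.algebraMap_eq_smul_one, hRSR] using hRinv.conjugate_le_conjugate haT
  · simpa [Algebra.algebraMap_eq_smul_one, hRSR] using hRinv.conjugate_le_conjugate hTb

end CStar

section FrameMultiplier
variable {H : Type*} [NormedAddCommGroup H] [InnerProductSpace ℂ H]

/-- The multiplier `M_{w,φ,φ}`; Mathlib's `⟪φ n, f⟫` is the paper's `⟨f, φ_n⟩`. -/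
def IsFrameMultiplier (φ : ℕ → H) (w : ℕ → ℝ) (T : H →L[ℂ] H) : Prop :=
  ∀ f, HasSum (fun n => ((w n : ℂ) * ⟪φ n, f⟫_ℂ) • φ n) (T f)

namespace IsFrameMultiplier
variable {φ : ℕ → H} {w w' : ℕ → ℝ} {T T' : H →L[ℂ] H}

theorem hasSum_inner (hT : IsFrameMultiplier φ w T) (f g : H) :
    HasSum (fun n => (w n : ℂ) * (⟪φ n, f⟫_ℂ * ⟪g, φ n⟫_ℂ)) ⟪g, T f⟫_ℂ := by
  simpa [inner_smul_right, mul_assoc] using (hT f).mapL (innerSL ℂ g)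

theorem hasSum_re_inner_self (hT : IsFrameMultiplier φ w T) (f : H) :
    HasSum (fun n => w n * ‖⟪φ n, f⟫_ℂ‖ ^ 2) (⟪f, T f⟫_ℂ).re := by
  refine (Complex.reCLM.hasSum (hT.hasSum_inner f f)).congr_fun fun n => ?_
  rw [← inner_conj_symm f (φ n), Complex.mul_conj, Complex.normSq_eq_norm_sq,
    Complex.reCLM_apply, ← Complex.ofReal_mul, Complex.ofReal_re]

theorem isSelfAdjoint [CompleteSpace H] (hT : IsFrameMultiplier φ w T) : IsSelfAdjoint T := by
  refine ContinuousLinearMap.isSelfAdjoint_iff_isSymmetric.2 fun f g => ?_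
  rw [← inner_conj_symm, ← Complex.star_def]
  refine HasSum.unique ?_ (hT.hasSum_inner g f)
  refine (hT.hasSum_inner f g).star.congr_fun fun n => ?_
  simp only [Complex.star_def, map_mul, Complex.conj_ofReal, inner_conj_symm]
  ring

theorem nonneg [CompleteSpace H] (hT : IsFrameMultiplier φ w T) (hw : ∀ n, 0 ≤ w n) :
    0 ≤ T := by
  rw [ContinuousLinearMap.nonneg_iff_isPositive, ContinuousLinearMap.isPositive_def']
  refine ⟨hT.isSelfAdjoint, fun f => ?_⟩
  rw [ContinuousLinearMap.reApplyInnerSelf_apply, inner_re_symm]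
  exact (hT.hasSum_re_inner_self f).nonneg fun n => mul_nonneg (hw n) (sq_nonneg _)

theorem sub (hT : IsFrameMultiplier φ w T) (hT' : IsFrameMultiplier φ w' T') :
    IsFrameMultiplier φ (w - w') (T - T') := fun f => by
  simpa [sub_mul, sub_smul] using (hT f).sub (hT' f)

theorem smul (hT : IsFrameMultiplier φ w T) (c : ℝ) : IsFrameMultiplier φ (c • w) (c • T) :=
  fun f => by simpa [mul_assoc, mul_smul] using (hT f).const_smul c

theorem mono [CompleteSpace H] (hT : IsFrameMultiplier φ w T) (hT' : IsFrameMultiplier φ w' T')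
    (hw : w ≤ w') : T ≤ T' :=
  sub_nonneg.1 <| (hT'.sub hT).nonneg fun n => sub_nonneg.2 (hw n)

end IsFrameMultiplier
end FrameMultiplier

theorem spectrum_multiplier_canonical_dual_real_general
    {H : Type*} [NormedAddCommGroup H] [InnerProductSpace ℂ H] [CompleteSpace H]
    (φ : ℕ → H)
    (S : H →L[ℂ] H) (hS : ∀ f : H, HasSum (fun n => ⟪φ n, f⟫_ℂ • φ n) (S f))
    (Sinv : H →L[ℂ] H) (hSinv : ∀ x : H, Sinv (S x) = x ∧ S (Sinv x) = x)
    (ψ : ℕ → H) (hψ : ∀ n, ψ n = Sinv (φ n))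
    (m : ℕ → ℝ) (hm : ∃ C : ℝ, ∀ n, |m n| ≤ C)
    (M : H →L[ℂ] H)
    (hM : ∀ f : H, HasSum (fun n => ((m n : ℂ) * ⟪ψ n, f⟫_ℂ) • φ n) (M f)) :
    (∀ z ∈ spectrum ℂ M, z.im = 0 ∧ (⨅ n, m n) ≤ z.re ∧ z.re ≤ (⨆ n, m n)) ∧
    ((∀ n, 0 ≤ m n) → ∀ z ∈ spectrum ℂ M, z.im = 0 ∧ 0 ≤ z.re ∧ z.re ≤ (⨆ n, m n)) := by
  obtain ⟨C, hC⟩ := hm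
  have hmI : ∀ n, (⨅ k, m k) ≤ m n :=
    ciInf_le ⟨-C, by rintro _ ⟨k, rfl⟩; linarith [(abs_le.1 (hC k)).1]⟩
  have hmS : ∀ n, m n ≤ ⨆ k, m k :=
    le_ciSup ⟨C, by rintro _ ⟨k, rfl⟩; exact (abs_le.1 (hC k)).2⟩
  have hS1 : IsFrameMultiplier φ 1 S := fun f => by simpa using hS f
  let uS : (H →L[ℂ] H)ˣ :=
    ⟨S, Sinv, ContinuousLinearMap.ext fun x => (hSinv x).2,
      ContinuousLinearMap.ext fun x => (hSinv x).1⟩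
  have hMS : IsFrameMultiplier φ m (M * S) := fun f => by
    refine (hM (S f)).congr_fun fun n => ?_
    have hSsymm : ⟪S (Sinv (φ n)), f⟫_ℂ = ⟪Sinv (φ n), S f⟫_ℂ :=
      hS1.isSelfAdjoint.isSymmetric _ _
    rw [hψ, ← hSsymm, (hSinv _).2]
  have hspec : spectrum ℂ M ⊆ Complex.ofReal '' Set.Icc (⨅ n, m n) (⨆ n, m n) := by
    have hM_eq : M = M * S * ↑uS⁻¹ := by
      ext f; exact congrArg M (hSinv f).2.symm
    rw [hM_eq]
    refine spectrum_mul_inv_subset_image_ofReal_Icc (hS1.nonneg fun _ => zero_le_one)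
      ((hS1.smul _).mono hMS fun n => ?_) (hMS.mono (hS1.smul _) fun n => ?_)
    · simpa using hmI n
    · simpa using hmS n
  refine ⟨fun z hz => ?_, fun hpos z hz => ?_⟩ <;>
    obtain ⟨x, ⟨hax, hxb⟩, rfl⟩ := hspec hz
  · exact ⟨Complex.ofReal_im x, hax, hxb⟩
  · exact ⟨Complex.ofReal_im x, (le_ciInf hpos).trans hax, hxb⟩

/-- for a real bounded symbol, the spectrum of the multiplier of a frame and
its canonical dual is real and contained in `[inf m, sup m]`; if moreover `m ≥ 0` the
spectrum is contained in `[0, sup m]`. -/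
theorem spectrum_multiplier_canonical_dual_real
    {H : Type*} [NormedAddCommGroup H] [InnerProductSpace ℂ H] [CompleteSpace H]
    (φ : ℕ → H) (A B : ℝ) (hA : 0 < A) (hB : 0 < B)
    (hframe : ∀ f : H, ∃ s : ℝ, HasSum (fun n => ‖⟪φ n, f⟫_ℂ‖ ^ 2) s ∧
      A * ‖f‖ ^ 2 ≤ s ∧ s ≤ B * ‖f‖ ^ 2)
    (S : H →L[ℂ] H) (hS : ∀ f : H, HasSum (fun n => ⟪φ n, f⟫_ℂ • φ n) (S f))
    (Sinv : H →L[ℂ] H) (hSinv : ∀ x : H, Sinv (S x) = x ∧ S (Sinv x) = x)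
    (ψ : ℕ → H) (hψ : ∀ n, ψ n = Sinv (φ n))
    (m : ℕ → ℝ) (hm : ∃ C : ℝ, ∀ n, |m n| ≤ C)
    (M : H →L[ℂ] H)
    (hM : ∀ f : H, HasSum (fun n => ((m n : ℂ) * ⟪ψ n, f⟫_ℂ) • φ n) (M f)) :
    (∀ z ∈ spectrum ℂ M, z.im = 0 ∧ (⨅ n, m n) ≤ z.re ∧ z.re ≤ (⨆ n, m n)) ∧
    ((∀ n, 0 ≤ m n) → ∀ z ∈ spectrum ℂ M, z.im = 0 ∧ 0 ≤ z.re ∧ z.re ≤ (⨆ n, m n)) :=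
  spectrum_multiplier_canonical_dual_real_general φ S hS Sinv hSinv ψ hψ m hm M hM
end

section
/- Let φ be a Parseval frame for H and m ∈ ℓ^∞. Then for every f ∈ H with ‖f‖ = 1 one has ⟨M_{m,φ,φ} f, f⟩ = Σ_n m_n |⟨f, φ_n⟩|², and consequently the numerical range of M_{m,φ,φ} (hence also its spectrum) is contained in the closed convex hull of the set {m_n : n ∈ ℕ}. -/
/-!
Pairing the expansion `M f = Σ m_n ⟪φ n, f⟫ φ n` with `f` gives `⟪f, M f⟫ = Σ m_n |⟪φ n, f⟫|²`.
For a unit vector the weights `|⟪φ n, f⟫|²` are nonnegative and sum to `1` (Parseval), so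
`⟪f, M f⟫` is a limit of finite convex combinations of the `m_n`. The spectrum lies in the closure
of the numerical range `W(T)` because `‖⟪x, (z - T) x⟫‖ ≥ dist(z, W(T)) ‖x‖²` makes `z - T`
invertible for `z` off that closure.
-/

open scoped InnerProductSpace
open Filter Topology

theorem mem_closure_convexHull_of_hasSum {ι E : Type*} [AddCommGroup E] [Module ℝ E]
    [TopologicalSpace E] [ContinuousSMul ℝ E] {p : ι → ℝ} {x : ι → E} {z : E}
    (hp₀ : ∀ i, 0 ≤ p i) (hp : HasSum p 1) (hz : HasSum (fun i => p i • x i) z) :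
    z ∈ closure (convexHull ℝ (Set.range x)) := by
  have hcenterMass : Tendsto (fun s : Finset ι => s.centerMass p x) atTop (𝓝 z) := by
    simpa [Finset.centerMass] using (hp.inv₀ one_ne_zero).smul hz
  refine mem_closure_of_tendsto hcenterMass ?_
  filter_upwards [hp.eventually (eventually_gt_nhds one_pos)] with s hs
  exact s.centerMass_mem_convexHull (fun i _ => hp₀ i) hs fun i _ => Set.mem_range_self i

section InnerProduct

variable {𝕜 E : Type*} [RCLike 𝕜] [NormedAddCommGroup E] [InnerProductSpace 𝕜 E]

theorem hasSum_inner_of_hasSum_mul_inner_smul {ι : Type*} {φ : ι → E} {m : ι → 𝕜} {f v : E}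
    (hv : HasSum (fun n => (m n * ⟪φ n, f⟫_𝕜) • φ n) v) :
    HasSum (fun n => m n * ((‖⟪φ n, f⟫_𝕜‖ ^ 2 : ℝ) : 𝕜)) ⟪f, v⟫_𝕜 := by
  have hinner := (innerSL 𝕜 f).hasSum hv
  simp only [innerSL_apply_apply, inner_smul_right] at hinner
  convert hinner using 2 with n
  rw [← inner_conj_symm f (φ n), mul_assoc, RCLike.mul_conj]
  norm_cast

namespace ContinuousLinearMap

def numericalRange (T : E →L[𝕜] E) : Set 𝕜 :=
  {z | ∃ f : E, ‖f‖ = 1 ∧ ⟪f, T f⟫_𝕜 = z}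

theorem norm_sq_mul_le_norm_inner_algebraMap_sub (T : E →L[𝕜] E) {z : 𝕜} {ε : ℝ}
    (hz : ∀ w ∈ numericalRange T, ε ≤ dist z w) (x : E) :
    ‖x‖ ^ 2 * ε ≤ ‖⟪(algebraMap 𝕜 (E →L[𝕜] E) z - T) x, x⟫_𝕜‖ := by
  rcases eq_or_ne x 0 with rfl | hx
  · simp
  set g : E := (‖x‖⁻¹ : 𝕜) • x
  have hg : ‖g‖ = 1 := by simp [g, norm_smul, hx]
  have hTx : ⟪x, T x⟫_𝕜 = (‖x‖ ^ 2 : 𝕜) * ⟪g, T g⟫_𝕜 := by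
    have hx' : (‖x‖ : 𝕜) ≠ 0 := by simpa using hx
    simp only [g, map_smul, inner_smul_left, inner_smul_right, map_inv₀, RCLike.conj_ofReal]
    field_simp
  have hinner : ⟪x, (algebraMap 𝕜 (E →L[𝕜] E) z - T) x⟫_𝕜
      = (‖x‖ ^ 2 : 𝕜) * (z - ⟪g, T g⟫_𝕜) := by
    rw [sub_apply, ContinuousLinearMap.algebraMap_apply, inner_sub_right,
      inner_smul_right, inner_self_eq_norm_sq_to_K, hTx]
    ring
  calc ‖x‖ ^ 2 * ε ≤ ‖x‖ ^ 2 * dist z ⟪g, T g⟫_𝕜 := by gcongr; exact hz _ ⟨g, hg, rfl⟩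
    _ = ‖⟪(algebraMap 𝕜 (E →L[𝕜] E) z - T) x, x⟫_𝕜‖ := by
      rw [← norm_inner_symm, hinner, norm_mul, norm_pow, RCLike.norm_ofReal, abs_norm,
        dist_eq_norm]

theorem spectrum_subset_closure_numericalRange [CompleteSpace E] (T : E →L[𝕜] E) :
    spectrum 𝕜 T ⊆ closure (numericalRange T) := by
  intro z hz
  by_contra hzW
  obtain ⟨ε, hε, hball⟩ : ∃ ε > 0, ∀ w ∈ numericalRange T, ε ≤ dist z w := by
    simpa [Metric.mem_closure_iff] using hzW
  exact spectrum.notMem_iff.mpr (isUnit_of_forall_le_norm_inner_map _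
    (c := ⟨ε, hε.le⟩) hε (norm_sq_mul_le_norm_inner_algebraMap_sub T hball)) hz

end ContinuousLinearMap

end InnerProduct

theorem multiplier_parseval_numericalRange_convexHull_general
    {H : Type*} [NormedAddCommGroup H] [InnerProductSpace ℂ H] [CompleteSpace H]
    (φ : ℕ → H)
    (hφ : ∀ f : H, HasSum (fun n => ‖⟪φ n, f⟫_ℂ‖ ^ 2) (‖f‖ ^ 2))
    (m : ℕ → ℂ)
    (M : H →L[ℂ] H)
    (hM : ∀ f : H, HasSum (fun n => (m n * ⟪φ n, f⟫_ℂ) • φ n) (M f)) :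
    (∀ f : H, ‖f‖ = 1 →
      HasSum (fun n => m n * ((‖⟪φ n, f⟫_ℂ‖ ^ 2 : ℝ) : ℂ)) ⟪f, M f⟫_ℂ) ∧
    {z : ℂ | ∃ f : H, ‖f‖ = 1 ∧ ⟪f, M f⟫_ℂ = z} ⊆
      closure (convexHull ℝ (Set.range m)) ∧
    spectrum ℂ M ⊆ closure (convexHull ℝ (Set.range m)) := by
  have hquadratic (f : H) :
      HasSum (fun n => m n * ((‖⟪φ n, f⟫_ℂ‖ ^ 2 : ℝ) : ℂ)) ⟪f, M f⟫_ℂ :=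
    hasSum_inner_of_hasSum_mul_inner_smul (hM f)
  have hW : M.numericalRange ⊆ closure (convexHull ℝ (Set.range m)) := by
    rintro _ ⟨f, hf, rfl⟩
    refine mem_closure_convexHull_of_hasSum (fun n => sq_nonneg ‖⟪φ n, f⟫_ℂ‖)
      (by simpa [hf] using hφ f) ?_
    exact (hquadratic f).congr_fun fun n => by rw [Complex.real_smul, mul_comm]
  exact ⟨fun f _ => hquadratic f, hW,
    M.spectrum_subset_closure_numericalRange.trans (closure_minimal hW isClosed_closure)⟩

/-- for a Parseval frame `φ`, `⟨M_{m,φ,φ} f, f⟩ = Σ m_n |⟨f,φ_n⟩|²` for unit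
vectors `f`, hence the numerical range (and the spectrum) of `M_{m,φ,φ}` is contained in the
closed convex hull of `{m_n}`. -/
theorem multiplier_parseval_numericalRange_convexHull
    {H : Type*} [NormedAddCommGroup H] [InnerProductSpace ℂ H] [CompleteSpace H]
    (φ : ℕ → H)
    (hφ : ∀ f : H, HasSum (fun n => ‖⟪φ n, f⟫_ℂ‖ ^ 2) (‖f‖ ^ 2))
    (m : ℕ → ℂ) (hm : ∃ C : ℝ, ∀ n, ‖m n‖ ≤ C)
    (M : H →L[ℂ] H)
    (hM : ∀ f : H, HasSum (fun n => (m n * ⟪φ n, f⟫_ℂ) • φ n) (M f)) :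
    (∀ f : H, ‖f‖ = 1 →
      HasSum (fun n => m n * ((‖⟪φ n, f⟫_ℂ‖ ^ 2 : ℝ) : ℂ)) ⟪f, M f⟫_ℂ) ∧
    {z : ℂ | ∃ f : H, ‖f‖ = 1 ∧ ⟪f, M f⟫_ℂ = z} ⊆
      closure (convexHull ℝ (Set.range m)) ∧
    spectrum ℂ M ⊆ closure (convexHull ℝ (Set.range m)) :=
  multiplier_parseval_numericalRange_convexHull_general φ hφ m M hM
end

section
/- Let φ be a frame for H, ψ its canonical dual frame, and m ∈ ℓ^∞. Then the spectrum of M_{m,φ,ψ} is contained in the closed convex hull of the set {m_n : n ∈ ℕ} in ℂ. -/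
open scoped InnerProductSpace

/-!
If `λ` lies outside the closed convex hull of the symbol, a real functional `f` on `ℂ`
separates them: `f (m n) ≤ u < f λ`. Since `⟪ψ n, S g⟫ = ⟪φ n, g⟫`, both `⟪g, S g⟫` and
`⟪g, M S g⟫` are sums against the weights `|⟪φ n, g⟫|²`, whose total is at least `A ‖g‖²`; hence
`f ⟪g, (λ - M) S g⟫ ≥ A (f λ - u) ‖g‖²`. An operator whose numerical range is bounded away from
`0` in this sense is invertible, so `λ - M` is invertible.
-/

namespace ContinuousLinearMap

variable {𝕜 H : Type*} [RCLike 𝕜] [NormedAddCommGroup H] [InnerProductSpace 𝕜 H]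

theorem isUnit_of_forall_le_apply_inner [CompleteSpace H] (T : H →L[𝕜] H) (f : 𝕜 →L[ℝ] ℝ)
    {c : ℝ} (hc : 0 < c) (h : ∀ x, c * ‖x‖ ^ 2 ≤ f ⟪x, T x⟫_𝕜) : IsUnit T := by
  -- `‖f‖ + 1` rather than `‖f‖` spares a case split on `f = 0`.
  have hf : 0 < ‖f‖ + 1 := by positivity
  refine T.isUnit_of_forall_le_norm_inner_map (c := ⟨c / (‖f‖ + 1), by positivity⟩)
    (NNReal.coe_pos.mp (div_pos hc hf)) fun x => ?_
  have hbound : c * ‖x‖ ^ 2 ≤ (‖f‖ + 1) * ‖⟪T x, x⟫_𝕜‖ :=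
    calc c * ‖x‖ ^ 2 ≤ f ⟪x, T x⟫_𝕜 := h x
      _ ≤ ‖f‖ * ‖⟪x, T x⟫_𝕜‖ := (le_abs_self _).trans (f.le_opNorm _)
      _ ≤ (‖f‖ + 1) * ‖⟪T x, x⟫_𝕜‖ := by rw [norm_inner_symm]; nlinarith [norm_nonneg ⟪T x, x⟫_𝕜]
  show ‖x‖ ^ 2 * (c / (‖f‖ + 1)) ≤ _
  rw [← mul_div_assoc, div_le_iff₀ hf]
  linarith

theorem apply_le_of_hasSum_smul {ι E : Type*} [AddCommGroup E]
    [TopologicalSpace E] [Module ℝ E] (f : E →L[ℝ] ℝ) {w : ι → ℝ} {v : ι → E} {t u : ℝ} {z : E}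
    (hw : ∀ i, 0 ≤ w i) (ht : HasSum w t) (hz : HasSum (fun i => w i • v i) z)
    (hv : ∀ i, f (v i) ≤ u) : f z ≤ t * u :=
  hasSum_le (fun i => by
      simpa only [map_smul, smul_eq_mul] using mul_le_mul_of_nonneg_left (hv i) (hw i))
    (hz.mapL f) (ht.mul_right u)

end ContinuousLinearMap

section Frame

variable {𝕜 H : Type*} [RCLike 𝕜] [NormedAddCommGroup H] [InnerProductSpace 𝕜 H]
  {φ : ℕ → H} {S : H →L[𝕜] H}

theorem hasSum_inner_of_hasSum_frame (hS : ∀ f, HasSum (fun n => ⟪φ n, f⟫_𝕜 • φ n) (S f))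
    (x y : H) : HasSum (fun n => ⟪x, φ n⟫_𝕜 * ⟪φ n, y⟫_𝕜) ⟪x, S y⟫_𝕜 := by
  simpa only [map_smul, innerSL_apply_apply, smul_eq_mul, mul_comm] using (hS y).mapL (innerSL 𝕜 x)

theorem isSymmetric_of_hasSum_frame (hS : ∀ f, HasSum (fun n => ⟪φ n, f⟫_𝕜 • φ n) (S f)) :
    (S : H →ₗ[𝕜] H).IsSymmetric := by
  intro x y
  have hconj := (hasSum_inner_of_hasSum_frame hS y x).map (starRingEnd 𝕜) RCLike.continuous_conj
  rw [← inner_conj_symm]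
  refine hconj.unique ?_
  simpa only [Function.comp_def, map_mul, inner_conj_symm, mul_comm, ContinuousLinearMap.coe_coe]
    using hasSum_inner_of_hasSum_frame hS x y

theorem inner_self_eq_of_hasSum_frame (hS : ∀ f, HasSum (fun n => ⟪φ n, f⟫_𝕜 • φ n) (S f))
    {g : H} {t : ℝ} (ht : HasSum (fun n => ‖⟪φ n, g⟫_𝕜‖ ^ 2) t) : ⟪g, S g⟫_𝕜 = t := by
  refine (hasSum_inner_of_hasSum_frame hS g g).unique ?_
  simpa only [← inner_conj_symm g, RCLike.conj_mul, RCLike.ofReal_pow]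
    using (RCLike.hasSum_ofReal 𝕜).mpr ht

theorem hasSum_inner_multiplier_comp_of_hasSum_frame
    (hS : ∀ f, HasSum (fun n => ⟪φ n, f⟫_𝕜 • φ n) (S f)) {ψ : ℕ → H} (hψ : ∀ n, S (ψ n) = φ n)
    {m : ℕ → 𝕜} {M : H →L[𝕜] H}
    (hM : ∀ f, HasSum (fun n => (m n * ⟪ψ n, f⟫_𝕜) • φ n) (M f)) (g : H) :
    HasSum (fun n => ‖⟪φ n, g⟫_𝕜‖ ^ 2 • m n) ⟪g, M (S g)⟫_𝕜 := by
  have hψS (n : ℕ) : ⟪ψ n, S g⟫_𝕜 = ⟪φ n, g⟫_𝕜 := by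
    rw [← hψ n]
    exact (isSymmetric_of_hasSum_frame hS (ψ n) g).symm
  have hinner := (hM (S g)).mapL (innerSL 𝕜 g)
  simp only [innerSL_apply_apply] at hinner
  convert hinner using 2 with n
  rw [inner_smul_right, hψS, RCLike.real_smul_eq_coe_mul,
    RCLike.ofReal_pow, ← RCLike.conj_mul, inner_conj_symm]
  ring

end Frame

theorem spectrum_multiplier_canonical_dual_subset_convexHull_general
    {H : Type*} [NormedAddCommGroup H] [InnerProductSpace ℂ H] [CompleteSpace H]
    (φ : ℕ → H) (A B : ℝ) (hA : 0 < A)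
    (hframe : ∀ f : H, ∃ s : ℝ, HasSum (fun n => ‖⟪φ n, f⟫_ℂ‖ ^ 2) s ∧
      A * ‖f‖ ^ 2 ≤ s ∧ s ≤ B * ‖f‖ ^ 2)
    (S : H →L[ℂ] H) (hS : ∀ f : H, HasSum (fun n => ⟪φ n, f⟫_ℂ • φ n) (S f))
    (Sinv : H →L[ℂ] H) (hSinv : ∀ x : H, Sinv (S x) = x ∧ S (Sinv x) = x)
    (ψ : ℕ → H) (hψ : ∀ n, ψ n = Sinv (φ n))
    (m : ℕ → ℂ)
    (M : H →L[ℂ] H)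
    (hM : ∀ f : H, HasSum (fun n => (m n * ⟪ψ n, f⟫_ℂ) • φ n) (M f)) :
    spectrum ℂ M ⊆ closure (convexHull ℝ (Set.range m)) := by
  intro lam hlam
  by_contra hlam_out
  obtain ⟨f, u, hf_hull, hu_lam⟩ := geometric_hahn_banach_closed_point
    (convex_convexHull ℝ (Set.range m)).closure isClosed_closure hlam_out
  have hf_m (n : ℕ) : f (m n) ≤ u :=
    (hf_hull _ (subset_closure (subset_convexHull ℝ _ ⟨n, rfl⟩))).le
  have hSψ (n : ℕ) : S (ψ n) = φ n := by rw [hψ, (hSinv _).2]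
  set T := algebraMap ℂ (H →L[ℂ] H) lam - M
  have hcoercive (g : H) : A * (f lam - u) * ‖g‖ ^ 2 ≤ f ⟪g, (T * S) g⟫_ℂ := by
    obtain ⟨t, ht, hAt, -⟩ := hframe g
    have hM_le : f ⟪g, M (S g)⟫_ℂ ≤ t * u := f.apply_le_of_hasSum_smul (fun n => by positivity) ht
      (hasSum_inner_multiplier_comp_of_hasSum_frame hS hSψ hM g) hf_m
    have hTS : ⟪g, (T * S) g⟫_ℂ = t • lam - ⟪g, M (S g)⟫_ℂ := by
      simp [T, inner_self_eq_of_hasSum_frame hS ht,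
        Algebra.algebraMap_eq_smul_one, Complex.real_smul, mul_comm]
    rw [hTS, map_sub, map_smul, smul_eq_mul]
    nlinarith
  have hS_unit : IsUnit S :=
    ⟨⟨S, Sinv, ContinuousLinearMap.ext fun x => (hSinv x).2,
      ContinuousLinearMap.ext fun x => (hSinv x).1⟩, rfl⟩
  exact hlam ((hS_unit.mul_right_iff).mp
    ((T * S).isUnit_of_forall_le_apply_inner f (mul_pos hA (sub_pos.2 hu_lam)) hcoercive))

/-- the spectrum of the multiplier of a frame and its canonical dual is
contained in the closed convex hull of the symbol. -/
theorem spectrum_multiplier_canonical_dual_subset_convexHull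
    {H : Type*} [NormedAddCommGroup H] [InnerProductSpace ℂ H] [CompleteSpace H]
    (φ : ℕ → H) (A B : ℝ) (hA : 0 < A) (hB : 0 < B)
    (hframe : ∀ f : H, ∃ s : ℝ, HasSum (fun n => ‖⟪φ n, f⟫_ℂ‖ ^ 2) s ∧
      A * ‖f‖ ^ 2 ≤ s ∧ s ≤ B * ‖f‖ ^ 2)
    (S : H →L[ℂ] H) (hS : ∀ f : H, HasSum (fun n => ⟪φ n, f⟫_ℂ • φ n) (S f))
    (Sinv : H →L[ℂ] H) (hSinv : ∀ x : H, Sinv (S x) = x ∧ S (Sinv x) = x)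
    (ψ : ℕ → H) (hψ : ∀ n, ψ n = Sinv (φ n))
    (m : ℕ → ℂ) (hm : ∃ C : ℝ, ∀ n, ‖m n‖ ≤ C)
    (M : H →L[ℂ] H)
    (hM : ∀ f : H, HasSum (fun n => (m n * ⟪ψ n, f⟫_ℂ) • φ n) (M f)) :
    spectrum ℂ M ⊆ closure (convexHull ℝ (Set.range m)) :=
  spectrum_multiplier_canonical_dual_subset_convexHull_general φ A B hA hframe S hS Sinv hSinv ψ hψ
    m M hM
end

section
/- Let φ and ψ be dual frames for H with upper frame bounds B_φ and B_ψ, and let m ∈ ℓ^∞. If λ, μ ∈ ℂ satisfy (sup_n |m_n − μ|) · B_φ^{1/2} · B_ψ^{1/2} < |μ − λ|, then M_{m,φ,ψ} − λI is boundedly invertible, i.e. λ belongs to the resolvent set of M_{m,φ,ψ}. -/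
open scoped InnerProductSpace

/-! The symbol `m - μ` is bounded by `S := sup ‖m n - μ‖`, so by Cauchy–Schwarz and the two
Bessel bounds the multiplier `M - μ = M_{m - μ, φ, ψ}` has norm at most `S √Bφ √Bψ < ‖μ - λ‖`.
Hence `λ - μ` lies outside the spectrum of `M - μ`, i.e. `λ` lies outside the spectrum of `M`. -/

section Bessel

variable {ι 𝕜 H : Type*} [RCLike 𝕜] [NormedAddCommGroup H] [InnerProductSpace 𝕜 H]

theorem summable_mul_and_tsum_mul_le_sqrt_mul_sqrt {a b : ι → ℝ} {A B : ℝ}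
    (ha : ∀ i, 0 ≤ a i) (hb : ∀ i, 0 ≤ b i)
    (hA : HasSum (fun i => a i ^ 2) A) (hB : HasSum (fun i => b i ^ 2) B) :
    Summable (fun i => a i * b i) ∧ ∑' i, a i * b i ≤ √A * √B := by
  have partial_le : ∀ s : Finset ι, ∑ i ∈ s, a i * b i ≤ √A * √B := fun s =>
    (Real.sum_mul_le_sqrt_mul_sqrt s a b).trans <| by
      gcongr
      exacts [sum_le_hasSum s (fun i _ => sq_nonneg _) hA,
        sum_le_hasSum s (fun i _ => sq_nonneg _) hB]
  have hsum : Summable (fun i => a i * b i) :=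
    summable_of_sum_le (fun i => mul_nonneg (ha i) (hb i)) partial_le
  exact ⟨hsum, hsum.tsum_le_of_sum_le partial_le⟩

variable (𝕜) in
def IsBesselSequence (φ : ι → H) (B : ℝ) : Prop :=
  ∀ f : H, ∃ s : ℝ, HasSum (fun i => ‖⟪φ i, f⟫_𝕜‖ ^ 2) s ∧ s ≤ B * ‖f‖ ^ 2

theorem IsBesselSequence.norm_le_of_hasSum {φ : ι → H} {B : ℝ} (hφ : IsBesselSequence 𝕜 φ B)
    {c : ι → 𝕜} {C : ℝ} (hc : HasSum (fun i => ‖c i‖ ^ 2) C)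
    {v : H} (hv : HasSum (fun i => c i • φ i) v) :
    ‖v‖ ≤ √C * √B := by
  obtain ⟨s, hs, hsB⟩ := hφ v
  have hinner : HasSum (fun i => c i * ⟪v, φ i⟫_𝕜) ((‖v‖ : 𝕜) ^ 2) := by
    simpa only [innerSL_apply_apply, inner_smul_right, inner_self_eq_norm_sq_to_K] using
      hv.mapL (innerSL 𝕜 v)
  obtain ⟨hsum, hcs⟩ := summable_mul_and_tsum_mul_le_sqrt_mul_sqrt
    (fun i => norm_nonneg (c i)) (fun i => norm_nonneg ⟪v, φ i⟫_𝕜) hc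
    (by simpa only [norm_inner_symm] using hs)
  have hsq : ‖v‖ * ‖v‖ ≤ √C * √B * ‖v‖ :=
    calc ‖v‖ * ‖v‖ = ‖∑' i, c i * ⟪v, φ i⟫_𝕜‖ := by
          rw [hinner.tsum_eq, norm_pow, RCLike.norm_ofReal, abs_norm, sq]
      _ ≤ ∑' i, ‖c i‖ * ‖⟪v, φ i⟫_𝕜‖ := by
          simpa only [norm_mul] using norm_tsum_le_tsum_norm (f := fun i => c i * ⟪v, φ i⟫_𝕜)
            (by simpa only [norm_mul] using hsum)
      _ ≤ √C * √s := hcs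
      _ ≤ √C * (√B * ‖v‖) := by
          gcongr
          exact (Real.sqrt_le_sqrt hsB).trans_eq
            (by rw [Real.sqrt_mul' _ (sq_nonneg _), Real.sqrt_sq (norm_nonneg _)])
      _ = √C * √B * ‖v‖ := (mul_assoc _ _ _).symm
  rcases (norm_nonneg v).eq_or_lt with hv0 | hvpos
  · rw [← hv0]; positivity
  · exact le_of_mul_le_mul_right hsq hvpos

theorem IsBesselSequence.norm_le_of_hasSum_multiplier {φ ψ : ι → H} {Bφ Bψ : ℝ}
    (hφ : IsBesselSequence 𝕜 φ Bφ) (hψ : IsBesselSequence 𝕜 ψ Bψ)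
    {c : ι → 𝕜} {S : ℝ} (hS : 0 ≤ S) (hc : ∀ i, ‖c i‖ ≤ S)
    {f v : H} (hv : HasSum (fun i => (c i * ⟪ψ i, f⟫_𝕜) • φ i) v) :
    ‖v‖ ≤ S * √Bφ * √Bψ * ‖f‖ := by
  obtain ⟨s, hs, hsB⟩ := hψ f
  have hle : ∀ i, ‖c i * ⟪ψ i, f⟫_𝕜‖ ^ 2 ≤ S ^ 2 * ‖⟪ψ i, f⟫_𝕜‖ ^ 2 := fun i => by
    rw [norm_mul, mul_pow]
    gcongr
    exact hc i
  have hsum : Summable (fun i => ‖c i * ⟪ψ i, f⟫_𝕜‖ ^ 2) :=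
    .of_nonneg_of_le (fun i => by positivity) hle (hs.summable.mul_left _)
  have hcoef : √(∑' i, ‖c i * ⟪ψ i, f⟫_𝕜‖ ^ 2) ≤ √Bψ * (‖f‖ * S) :=
    calc √(∑' i, ‖c i * ⟪ψ i, f⟫_𝕜‖ ^ 2) ≤ √(Bψ * (‖f‖ * S) ^ 2) := by
          refine Real.sqrt_le_sqrt ?_
          calc ∑' i, ‖c i * ⟪ψ i, f⟫_𝕜‖ ^ 2 ≤ S ^ 2 * s := by
                rw [← hs.tsum_eq, ← tsum_mul_left]
                exact hsum.tsum_le_tsum hle (hs.summable.mul_left _)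
            _ ≤ S ^ 2 * (Bψ * ‖f‖ ^ 2) := by gcongr
            _ = Bψ * (‖f‖ * S) ^ 2 := by ring
      _ = √Bψ * (‖f‖ * S) := by
          rw [Real.sqrt_mul' _ (sq_nonneg _), Real.sqrt_sq (by positivity)]
  calc ‖v‖ ≤ √(∑' i, ‖c i * ⟪ψ i, f⟫_𝕜‖ ^ 2) * √Bφ := hφ.norm_le_of_hasSum hsum.hasSum hv
    _ ≤ √Bψ * (‖f‖ * S) * √Bφ := by gcongr
    _ = S * √Bφ * √Bψ * ‖f‖ := by ring

theorem hasSum_multiplier_sub_algebraMap {φ ψ : ι → H}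
    (hdual : ∀ f : H, HasSum (fun i => ⟪ψ i, f⟫_𝕜 • φ i) f)
    {m : ι → 𝕜} {M : H →L[𝕜] H} (hM : ∀ f : H, HasSum (fun i => (m i * ⟪ψ i, f⟫_𝕜) • φ i) (M f))
    (μ : 𝕜) (f : H) :
    HasSum (fun i => ((m i - μ) * ⟪ψ i, f⟫_𝕜) • φ i) ((M - algebraMap 𝕜 (H →L[𝕜] H) μ) f) := by
  simpa only [sub_mul, sub_smul, smul_smul, Algebra.algebraMap_eq_smul_one,
    sub_apply, smul_apply, one_apply_eq_self] using (hM f).sub ((hdual f).const_smul μ)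

end Bessel

theorem mem_resolventSet_of_norm_sub_algebraMap_lt {𝕜 E : Type*} [NontriviallyNormedField 𝕜]
    [NormedAddCommGroup E] [NormedSpace 𝕜 E] [CompleteSpace E] {T : E →L[𝕜] E} {lam mu : 𝕜}
    (h : ‖T - algebraMap 𝕜 (E →L[𝕜] E) mu‖ < ‖mu - lam‖) : lam ∈ resolventSet 𝕜 T := by
  by_contra hlam
  have hmem : lam - mu ∈ spectrum 𝕜 (T - algebraMap 𝕜 (E →L[𝕜] E) mu) := by
    rw [← spectrum.sub_singleton_eq]
    exact Set.sub_mem_sub hlam rfl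
  refine h.not_ge ?_
  calc ‖mu - lam‖ = ‖lam - mu‖ := norm_sub_rev _ _
    _ ≤ ‖T - algebraMap 𝕜 (E →L[𝕜] E) mu‖ * ‖(1 : E →L[𝕜] E)‖ :=
      mem_closedBall_zero_iff.mp (spectrum.subset_closedBall_norm_mul _ hmem)
    _ ≤ ‖T - algebraMap 𝕜 (E →L[𝕜] E) mu‖ :=
      mul_le_of_le_one_right (norm_nonneg _) ContinuousLinearMap.norm_id_le

theorem resolvent_dual_frames_multiplier_general
    {H : Type*} [NormedAddCommGroup H] [InnerProductSpace ℂ H] [CompleteSpace H]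
    (φ ψ : ℕ → H) (Aφ Bφ Aψ Bψ : ℝ)
    (hφ : ∀ f : H, ∃ s : ℝ, HasSum (fun n => ‖⟪φ n, f⟫_ℂ‖ ^ 2) s ∧
      Aφ * ‖f‖ ^ 2 ≤ s ∧ s ≤ Bφ * ‖f‖ ^ 2)
    (hψ : ∀ f : H, ∃ s : ℝ, HasSum (fun n => ‖⟪ψ n, f⟫_ℂ‖ ^ 2) s ∧
      Aψ * ‖f‖ ^ 2 ≤ s ∧ s ≤ Bψ * ‖f‖ ^ 2)
    (hdual : ∀ f : H, HasSum (fun n => ⟪ψ n, f⟫_ℂ • φ n) f)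
    (m : ℕ → ℂ) (hm : ∃ C : ℝ, ∀ n, ‖m n‖ ≤ C)
    (M : H →L[ℂ] H)
    (hM : ∀ f : H, HasSum (fun n => (m n * ⟪ψ n, f⟫_ℂ) • φ n) (M f))
    (lam mu : ℂ)
    (hcond : (⨆ n, ‖m n - mu‖) * Real.sqrt Bφ * Real.sqrt Bψ < ‖mu - lam‖) :
    lam ∈ resolventSet ℂ M := by
  obtain ⟨C, hC⟩ := hm
  have hbdd : BddAbove (Set.range fun n => ‖m n - mu‖) :=
    ⟨C + ‖mu‖, by rintro _ ⟨n, rfl⟩; exact (norm_sub_le _ _).trans (by gcongr; exact hC n)⟩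
  have hφB : IsBesselSequence ℂ φ Bφ := fun f => (hφ f).imp fun _ hs => ⟨hs.1, hs.2.2⟩
  have hψB : IsBesselSequence ℂ ψ Bψ := fun f => (hψ f).imp fun _ hs => ⟨hs.1, hs.2.2⟩
  have hS : 0 ≤ ⨆ n, ‖m n - mu‖ := Real.iSup_nonneg fun n => norm_nonneg _
  have hnorm : ‖M - algebraMap ℂ (H →L[ℂ] H) mu‖ ≤ (⨆ n, ‖m n - mu‖) * √Bφ * √Bψ :=
    ContinuousLinearMap.opNorm_le_bound _ (by positivity) fun f =>
      hφB.norm_le_of_hasSum_multiplier hψB hS (le_ciSup hbdd)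
        (hasSum_multiplier_sub_algebraMap hdual hM mu f)
  exact mem_resolventSet_of_norm_sub_algebraMap_lt (hnorm.trans_lt hcond)

/-- for dual frames `φ, ψ`, if `(sup |m n - μ|)·Bφ^(1/2)·Bψ^(1/2) < |μ - λ|`
then `λ` belongs to the resolvent set of the multiplier. -/
theorem resolvent_dual_frames_multiplier
    {H : Type*} [NormedAddCommGroup H] [InnerProductSpace ℂ H] [CompleteSpace H]
    (φ ψ : ℕ → H) (Aφ Bφ Aψ Bψ : ℝ) (hAφ : 0 < Aφ) (hAψ : 0 < Aψ)
    (hφ : ∀ f : H, ∃ s : ℝ, HasSum (fun n => ‖⟪φ n, f⟫_ℂ‖ ^ 2) s ∧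
      Aφ * ‖f‖ ^ 2 ≤ s ∧ s ≤ Bφ * ‖f‖ ^ 2)
    (hψ : ∀ f : H, ∃ s : ℝ, HasSum (fun n => ‖⟪ψ n, f⟫_ℂ‖ ^ 2) s ∧
      Aψ * ‖f‖ ^ 2 ≤ s ∧ s ≤ Bψ * ‖f‖ ^ 2)
    (hdual : ∀ f : H, HasSum (fun n => ⟪ψ n, f⟫_ℂ • φ n) f)
    (m : ℕ → ℂ) (hm : ∃ C : ℝ, ∀ n, ‖m n‖ ≤ C)
    (M : H →L[ℂ] H)
    (hM : ∀ f : H, HasSum (fun n => (m n * ⟪ψ n, f⟫_ℂ) • φ n) (M f))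
    (lam mu : ℂ)
    (hcond : (⨆ n, ‖m n - mu‖) * Real.sqrt Bφ * Real.sqrt Bψ < ‖mu - lam‖) :
    lam ∈ resolventSet ℂ M :=
  resolvent_dual_frames_multiplier_general φ ψ Aφ Bφ Aψ Bψ hφ hψ hdual m hm M hM lam mu hcond
end

section
/- Let φ, ψ be frames for H such that for some subset I ⊂ ℕ the subfamilies {φ_n : n ∈ I} and {ψ_n : n ∈ I} are Riesz bases for H with lower frame bounds A_{φ,1} and A_{ψ,1} respectively, and let B_{φ,2}, B_{ψ,2} be Bessel bounds of {φ_n : n ∉ I} and {ψ_n : n ∉ I}. Let m ∈ ℓ^∞. If (sup_{n∉I} |m_n|) · B_{φ,2}^{1/2} B_{ψ,2}^{1/2} < (inf_{n∈I} |m_n|) · A_{φ,1}^{1/2} A_{ψ,1}^{1/2}, then the multiplier M_{m,φ,ψ} is bijective. -/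
/-!
Split `M f = ∑_{n ∈ I} + ∑_{n ∉ I}`. On `I`, the lower Riesz bound of `φ` and the lower frame
bound of `ψ` give `‖∑_{n ∈ I}‖ ≥ (inf_I |m|) √Aφ √Aψ ‖f‖`; the lower frame bound of a Riesz basis
is proved on the span of the basis by Cauchy–Schwarz and extends to `H` by density, the
analysis operator `f ↦ (⟪φ n, f⟫)ₙ ∈ ℓ²` being continuous. Off `I`, writing the sum as the
synthesis operator (the adjoint of the analysis operator) applied to `(m n ⟪ψ n, f⟫)ₙ` gives
`‖∑_{n ∉ I}‖ ≤ (sup |m|) √Bφ √Bψ ‖f‖`. So `M` is bounded below by `δ > 0`. The adjoint of `M` is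
the multiplier with symbol `conj m` and the roles of `φ` and `ψ` exchanged, so it is bounded below
by the same `δ`; hence `M` has closed range with trivial orthogonal complement, and is bijective.
-/

open scoped InnerProductSpace

/-- `φ` is a Riesz basis with bounds `A ≤ B`: it is complete and the ℓ²-synthesis
inequalities hold. -/
def IsRieszBasisWith {H : Type*} [NormedAddCommGroup H] [InnerProductSpace ℂ H]
    {ι : Type*} (φ : ι → H) (A B : ℝ) : Prop :=
  (Submodule.span ℂ (Set.range φ)).topologicalClosure = ⊤ ∧
  ∀ c : ι → ℂ, Summable (fun n => ‖c n‖ ^ 2) →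
    ∃ s : H, HasSum (fun n => c n • φ n) s ∧
      A * ∑' n, ‖c n‖ ^ 2 ≤ ‖s‖ ^ 2 ∧ ‖s‖ ^ 2 ≤ B * ∑' n, ‖c n‖ ^ 2

/-- `φ` is a Bessel sequence with Bessel bound `B`. -/
def IsBesselWith {H : Type*} [NormedAddCommGroup H] [InnerProductSpace ℂ H]
    {ι : Type*} (φ : ι → H) (B : ℝ) : Prop :=
  ∀ f : H, ∃ s : ℝ, HasSum (fun n => ‖⟪φ n, f⟫_ℂ‖ ^ 2) s ∧ s ≤ B * ‖f‖ ^ 2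

/-- `φ` is a frame with bounds `A, B`. -/
def IsFrameWith {H : Type*} [NormedAddCommGroup H] [InnerProductSpace ℂ H]
    {ι : Type*} (φ : ι → H) (A B : ℝ) : Prop :=
  ∀ f : H, ∃ s : ℝ, HasSum (fun n => ‖⟪φ n, f⟫_ℂ‖ ^ 2) s ∧
    A * ‖f‖ ^ 2 ≤ s ∧ s ≤ B * ‖f‖ ^ 2

open scoped ComplexConjugate InnerProduct lp

section Bessel

variable {ι H : Type*} [NormedAddCommGroup H] [InnerProductSpace ℂ H] {φ ψ : ι → H} {B : ℝ}

theorem memℓp_two_of_summable_sq {E : ι → Type*} [∀ n, NormedAddCommGroup (E n)]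
    {c : ∀ n, E n} (hc : Summable fun n => ‖c n‖ ^ 2) : Memℓp c 2 :=
  memℓp_gen (by simpa using hc)

theorem lp.norm_sq_eq_tsum_sq {E : ι → Type*} [∀ n, NormedAddCommGroup (E n)] (x : lp E 2) :
    ‖x‖ ^ 2 = ∑' n, ‖x n‖ ^ 2 := by
  simpa using lp.norm_rpow_eq_tsum (p := 2) (by norm_num) x

theorem summable_norm_mul_sq {μ a : ι → ℂ} {C : ℝ} (hμ : ∀ n, ‖μ n‖ ≤ C)
    (ha : Summable fun n => ‖a n‖ ^ 2) :
    Summable (fun n => ‖μ n * a n‖ ^ 2) ∧ ∑' n, ‖μ n * a n‖ ^ 2 ≤ C ^ 2 * ∑' n, ‖a n‖ ^ 2 := by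
  have hle : ∀ n, ‖μ n * a n‖ ^ 2 ≤ C ^ 2 * ‖a n‖ ^ 2 := fun n => by
    rw [norm_mul, mul_pow]
    gcongr
    exact hμ n
  have hsum := Summable.of_nonneg_of_le (fun n => sq_nonneg _) hle (ha.mul_left _)
  exact ⟨hsum, tsum_mul_left (a := C ^ 2) ▸ hsum.tsum_le_tsum hle (ha.mul_left _)⟩

namespace IsBesselWith

theorem summable (hφ : IsBesselWith φ B) (f : H) : Summable fun n => ‖⟪φ n, f⟫_ℂ‖ ^ 2 :=
  let ⟨_, hs, _⟩ := hφ f; hs.summable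

theorem tsum_le (hφ : IsBesselWith φ B) (f : H) : ∑' n, ‖⟪φ n, f⟫_ℂ‖ ^ 2 ≤ B * ‖f‖ ^ 2 :=
  let ⟨_, hs, hle⟩ := hφ f; hs.tsum_eq ▸ hle

noncomputable def analysis (hφ : IsBesselWith φ B) : H →L[ℂ] ℓ²(ι, ℂ) :=
  LinearMap.mkContinuous
    { toFun := fun f => ⟨fun n => ⟪φ n, f⟫_ℂ, memℓp_two_of_summable_sq (hφ.summable f)⟩
      map_add' := fun f g => by ext n; exact inner_add_right _ _ _
      map_smul' := fun a f => by ext n; exact inner_smul_right _ _ _ }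
    (Real.sqrt B) fun f => by
      rw [← Real.sqrt_sq (norm_nonneg _), ← Real.sqrt_sq (norm_nonneg f),
        ← Real.sqrt_mul' _ (sq_nonneg _), lp.norm_sq_eq_tsum_sq]
      exact Real.sqrt_le_sqrt (hφ.tsum_le f)

@[simp]
theorem analysis_apply (hφ : IsBesselWith φ B) (f : H) (n : ι) : hφ.analysis f n = ⟪φ n, f⟫_ℂ :=
  rfl

theorem norm_analysis_sq (hφ : IsBesselWith φ B) (f : H) :
    ‖hφ.analysis f‖ ^ 2 = ∑' n, ‖⟪φ n, f⟫_ℂ‖ ^ 2 := by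
  simp [lp.norm_sq_eq_tsum_sq]

theorem opNorm_analysis_le (hφ : IsBesselWith φ B) : ‖hφ.analysis‖ ≤ Real.sqrt B :=
  LinearMap.mkContinuous_norm_le _ (Real.sqrt_nonneg B) _

variable [CompleteSpace H]

noncomputable def synthesis (hφ : IsBesselWith φ B) : ℓ²(ι, ℂ) →L[ℂ] H :=
  hφ.analysis†

theorem opNorm_synthesis_le (hφ : IsBesselWith φ B) : ‖hφ.synthesis‖ ≤ Real.sqrt B :=
  (ContinuousLinearMap.adjoint.norm_map _).trans_le hφ.opNorm_analysis_le

theorem hasSum_synthesis (hφ : IsBesselWith φ B) (c : ℓ²(ι, ℂ)) :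
    HasSum (fun n => c n • φ n) (hφ.synthesis c) := by
  classical
  convert hφ.synthesis.hasSum (lp.hasSum_single (by norm_num) c) using 2 with n
  refine ext_inner_right ℂ fun f => ?_
  rw [synthesis, ContinuousLinearMap.adjoint_inner_left, lp.inner_single_left, analysis_apply,
    inner_smul_left, RCLike.inner_apply, mul_comm]

theorem exists_multiplier_norm_le (hφ : IsBesselWith φ B) {Bψ : ℝ} (hψ : IsBesselWith ψ Bψ)
    {μ : ι → ℂ} {w : ℝ} (hw : 0 ≤ w) (hμ : ∀ n, ‖μ n‖ ≤ w) (f : H) :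
    ∃ s, HasSum (fun n => (μ n * ⟪ψ n, f⟫_ℂ) • φ n) s ∧
      ‖s‖ ≤ w * Real.sqrt B * Real.sqrt Bψ * ‖f‖ := by
  obtain ⟨hsum, hle⟩ := summable_norm_mul_sq hμ (hψ.summable f)
  let c : ℓ²(ι, ℂ) := ⟨_, memℓp_two_of_summable_sq hsum⟩
  have hc : ‖c‖ ≤ w * ‖hψ.analysis f‖ := by
    refine (pow_le_pow_iff_left₀ (norm_nonneg _) (by positivity) two_ne_zero).1 ?_
    rw [mul_pow, lp.norm_sq_eq_tsum_sq, hψ.norm_analysis_sq]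
    exact hle
  refine ⟨_, hφ.hasSum_synthesis c, ?_⟩
  calc ‖hφ.synthesis c‖ ≤ ‖hφ.synthesis‖ * ‖c‖ := hφ.synthesis.le_opNorm c
    _ ≤ Real.sqrt B * (w * (Real.sqrt Bψ * ‖f‖)) := by
      gcongr
      · exact hφ.opNorm_synthesis_le
      · exact hc.trans (by gcongr; exact hψ.analysis.le_of_opNorm_le hψ.opNorm_analysis_le f)
    _ = w * Real.sqrt B * Real.sqrt Bψ * ‖f‖ := by ring

end IsBesselWith

end Bessel

section Riesz

variable {ι H : Type*} [NormedAddCommGroup H] [InnerProductSpace ℂ H] {φ ψ : ι → H} {A B : ℝ}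

namespace IsRieszBasisWith

theorem norm_sum_sq_bounds (hφ : IsRieszBasisWith φ A B) (s : Finset ι) (c : ι → ℂ) :
    A * ∑ n ∈ s, ‖c n‖ ^ 2 ≤ ‖∑ n ∈ s, c n • φ n‖ ^ 2 ∧
      ‖∑ n ∈ s, c n • φ n‖ ^ 2 ≤ B * ∑ n ∈ s, ‖c n‖ ^ 2 := by
  classical
  set d : ι → ℂ := fun n => if n ∈ s then c n else 0
  have hd : ∀ n ∉ s, d n = 0 := fun n hn => if_neg hn
  have hsq : ∑' n, ‖d n‖ ^ 2 = ∑ n ∈ s, ‖c n‖ ^ 2 := by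
    rw [tsum_eq_sum fun n hn => by simp [hd n hn]]
    exact Finset.sum_congr rfl fun n hn => by simp [d, hn]
  obtain ⟨x, hx, hlo, hup⟩ :=
    hφ.2 d (summable_of_ne_finset_zero (s := s) fun n hn => by simp [hd n hn])
  have hxs : x = ∑ n ∈ s, c n • φ n := by
    rw [hx.unique (hasSum_sum_of_ne_finset_zero fun n hn => by simp [hd n hn])]
    exact Finset.sum_congr rfl fun n hn => by simp [d, hn]
  rw [← hsq, ← hxs]
  exact ⟨hlo, hup⟩

/-- For an empty family the Riesz condition holds with any `B`, hence the `max`. -/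
theorem isBesselWith (hφ : IsRieszBasisWith φ A B) : IsBesselWith φ (max B 0) := by
  intro f
  have hpartial : ∀ s : Finset ι, ∑ n ∈ s, ‖⟪φ n, f⟫_ℂ‖ ^ 2 ≤ max B 0 * ‖f‖ ^ 2 := fun s => by
    set S := ∑ n ∈ s, ‖⟪φ n, f⟫_ℂ‖ ^ 2
    set x := ∑ n ∈ s, ⟪φ n, f⟫_ℂ • φ n
    have hS : 0 ≤ S := Finset.sum_nonneg fun n _ => sq_nonneg _
    have hx : ‖x‖ ^ 2 ≤ max B 0 * S :=
      (hφ.norm_sum_sq_bounds s _).2.trans (mul_le_mul_of_nonneg_right (le_max_left B 0) hS)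
    have hfx : ⟪f, x⟫_ℂ = S := by
      simp only [x, S, inner_sum, inner_smul_right]
      push_cast
      exact Finset.sum_congr rfl fun n _ => by rw [← inner_conj_symm f (φ n), Complex.mul_conj']
    have hSx : S ≤ ‖f‖ * ‖x‖ := by
      calc S ≤ ‖(S : ℂ)‖ := by rw [Complex.norm_real, Real.norm_of_nonneg hS]
        _ ≤ ‖f‖ * ‖x‖ := hfx ▸ norm_inner_le_norm f x
    have hBf : 0 ≤ max B 0 * ‖f‖ ^ 2 := by positivity
    nlinarith [mul_self_le_mul_self hS hSx, mul_le_mul_of_nonneg_left hx (sq_nonneg ‖f‖)]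
  have hsum := summable_of_sum_le (fun n => sq_nonneg _) hpartial
  exact ⟨_, hsum.hasSum, hsum.tsum_le_of_sum_le hpartial⟩

theorem lower_frame_bound_of_mem_span (hφ : IsRieszBasisWith φ A B) {f : H}
    (hf : f ∈ Submodule.span ℂ (Set.range φ)) : A * ‖f‖ ^ 2 ≤ ∑' n, ‖⟪φ n, f⟫_ℂ‖ ^ 2 := by
  obtain ⟨c, rfl⟩ := Finsupp.mem_span_range_iff_exists_finsupp.1 hf
  set f := c.sum fun n a => a • φ n
  set P := ∑ n ∈ c.support, ‖c n‖ ^ 2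
  set S := ∑' n, ‖⟪φ n, f⟫_ℂ‖ ^ 2
  have hP : A * P ≤ ‖f‖ ^ 2 := (hφ.norm_sum_sq_bounds c.support c).1
  have hS : ∑ n ∈ c.support, ‖⟪φ n, f⟫_ℂ‖ ^ 2 ≤ S :=
    hφ.isBesselWith.summable f |>.sum_le_tsum _ fun n _ => sq_nonneg _
  have hff : ‖f‖ ^ 2 ≤ ∑ n ∈ c.support, ‖c n‖ * ‖⟪φ n, f⟫_ℂ‖ := by
    calc ‖f‖ ^ 2 = ‖⟪f, f⟫_ℂ‖ := by rw [inner_self_eq_norm_sq_to_K]; simp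
      _ = ‖∑ n ∈ c.support, c n * ⟪f, φ n⟫_ℂ‖ := by
        simp only [f, Finsupp.sum, inner_sum, inner_smul_right]
      _ ≤ ∑ n ∈ c.support, ‖c n‖ * ‖⟪φ n, f⟫_ℂ‖ := by
        refine (norm_sum_le _ _).trans_eq (Finset.sum_congr rfl fun n _ => ?_)
        rw [norm_mul, norm_inner_symm]
  have hP0 : 0 ≤ P := Finset.sum_nonneg fun n _ => sq_nonneg _
  have hS0 : 0 ≤ S := tsum_nonneg fun n => sq_nonneg _
  have hfour : (‖f‖ ^ 2) ^ 2 ≤ P * S :=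
    calc (‖f‖ ^ 2) ^ 2 ≤ (∑ n ∈ c.support, ‖c n‖ * ‖⟪φ n, f⟫_ℂ‖) ^ 2 := by gcongr
      _ ≤ P * ∑ n ∈ c.support, ‖⟪φ n, f⟫_ℂ‖ ^ 2 := Finset.sum_mul_sq_le_sq_mul_sq _ _ _
      _ ≤ P * S := by gcongr
  rcases le_or_gt A 0 with hA | hA
  · exact (mul_nonpos_of_nonpos_of_nonneg hA (sq_nonneg _)).trans hS0
  rcases (sq_nonneg ‖f‖).eq_or_lt with hf0 | hfpos
  · rw [← hf0, mul_zero]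
    exact hS0
  refine le_of_mul_le_mul_left ?_ hfpos
  calc ‖f‖ ^ 2 * (A * ‖f‖ ^ 2) = A * (‖f‖ ^ 2) ^ 2 := by ring
    _ ≤ A * (P * S) := by gcongr
    _ = A * P * S := by ring
    _ ≤ ‖f‖ ^ 2 * S := by gcongr

theorem lower_frame_bound (hφ : IsRieszBasisWith φ A B) (f : H) :
    A * ‖f‖ ^ 2 ≤ ∑' n, ‖⟪φ n, f⟫_ℂ‖ ^ 2 := by
  let U := hφ.isBesselWith.analysis
  have hclosed : IsClosed {f : H | A * ‖f‖ ^ 2 ≤ ‖U f‖ ^ 2} :=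
    isClosed_le (by fun_prop) (by fun_prop)
  have hspan : (Submodule.span ℂ (Set.range φ) : Set H) ⊆ {f : H | A * ‖f‖ ^ 2 ≤ ‖U f‖ ^ 2} :=
    fun f hf => by
      simpa [U, IsBesselWith.norm_analysis_sq] using hφ.lower_frame_bound_of_mem_span hf
  have hdense := closure_minimal hspan hclosed
  rw [← Submodule.topologicalClosure_coe, hφ.1, Submodule.top_coe] at hdense
  simpa [U, IsBesselWith.norm_analysis_sq] using hdense (Set.mem_univ f)

theorem exists_multiplier_lower_bound (hφ : IsRieszBasisWith φ A B) {Aψ Bψ : ℝ}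
    (hψ : IsRieszBasisWith ψ Aψ Bψ) (hA : 0 ≤ A) (hAψ : 0 ≤ Aψ) {μ : ι → ℂ} {ε C : ℝ}
    (hε : 0 ≤ ε) (hεμ : ∀ n, ε ≤ ‖μ n‖) (hμC : ∀ n, ‖μ n‖ ≤ C) (f : H) :
    ∃ s, HasSum (fun n => (μ n * ⟪ψ n, f⟫_ℂ) • φ n) s ∧
      ε * Real.sqrt A * Real.sqrt Aψ * ‖f‖ ≤ ‖s‖ := by
  have hψf := hψ.isBesselWith.summable f
  have hμψf := (summable_norm_mul_sq hμC hψf).1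
  obtain ⟨s, hs, hlo, -⟩ := hφ.2 _ hμψf
  refine ⟨s, hs, (pow_le_pow_iff_left₀ (by positivity) (norm_nonneg s) two_ne_zero).1 ?_⟩
  have hcoeff : ε ^ 2 * ∑' n, ‖⟪ψ n, f⟫_ℂ‖ ^ 2 ≤ ∑' n, ‖μ n * ⟪ψ n, f⟫_ℂ‖ ^ 2 := by
    rw [← tsum_mul_left]
    refine (hψf.mul_left _).tsum_le_tsum (fun n => ?_) hμψf
    rw [norm_mul, mul_pow]
    gcongr
    exact hεμ n
  calc (ε * Real.sqrt A * Real.sqrt Aψ * ‖f‖) ^ 2 = A * (ε ^ 2 * (Aψ * ‖f‖ ^ 2)) := by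
        rw [mul_pow, mul_pow, mul_pow, Real.sq_sqrt hA, Real.sq_sqrt hAψ]
        ring
    _ ≤ A * (ε ^ 2 * ∑' n, ‖⟪ψ n, f⟫_ℂ‖ ^ 2) := by gcongr; exact hψ.lower_frame_bound f
    _ ≤ A * ∑' n, ‖μ n * ⟪ψ n, f⟫_ℂ‖ ^ 2 := by gcongr
    _ ≤ ‖s‖ ^ 2 := hlo

end IsRieszBasisWith

end Riesz

theorem ContinuousLinearMap.bijective_of_lower_bound_of_adjoint {𝕜 E : Type*} [RCLike 𝕜]
    [NormedAddCommGroup E] [InnerProductSpace 𝕜 E] [CompleteSpace E] {T : E →L[𝕜] E} {δ : ℝ}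
    (hδ : 0 < δ) (hT : ∀ x, δ * ‖x‖ ≤ ‖T x‖) (hT' : ∀ y, δ * ‖y‖ ≤ ‖(T†) y‖) :
    Function.Bijective T := by
  have hanti : ∀ S : E →L[𝕜] E, (∀ x, δ * ‖x‖ ≤ ‖S x‖) → AntilipschitzWith δ⁻¹.toNNReal S :=
    fun S hS => S.antilipschitz_of_bound fun x => by
      rw [Real.coe_toNNReal _ (inv_nonneg.2 hδ.le), le_inv_mul_iff₀ hδ]
      exact hS x
  have hclosed : IsClosed (T.range : Set E) := by
    rw [LinearMap.coe_range]
    exact (hanti T hT).isClosed_range T.uniformContinuous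
  have : CompleteSpace T.range := hclosed.completeSpace_coe
  refine ⟨(hanti T hT).injective, LinearMap.range_eq_top.1 ?_⟩
  rw [← Submodule.orthogonal_eq_bot_iff, T.orthogonal_range, LinearMap.ker_eq_bot]
  exact (hanti _ hT').injective

section Multiplier

variable {ι H : Type*} [NormedAddCommGroup H] [InnerProductSpace ℂ H] [CompleteSpace H]
  {φ ψ : ι → H} {m : ι → ℂ}

theorem exists_multiplier_lower_bound_of_riesz_part {I : Set ι} {Aφ Aψ Bφ Bψ Bφ' Bψ' : ℝ}
    (hφ1 : IsRieszBasisWith (fun n : I => φ n) Aφ Bφ')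
    (hψ1 : IsRieszBasisWith (fun n : I => ψ n) Aψ Bψ')
    (hφ2 : IsBesselWith (fun n : {n // n ∉ I} => φ n) Bφ)
    (hψ2 : IsBesselWith (fun n : {n // n ∉ I} => ψ n) Bψ) (hAφ : 0 ≤ Aφ) (hAψ : 0 ≤ Aψ)
    {ε w C : ℝ} (hε : 0 ≤ ε) (hεm : ∀ n ∈ I, ε ≤ ‖m n‖) (hmC : ∀ n ∈ I, ‖m n‖ ≤ C)
    (hw : 0 ≤ w) (hmw : ∀ n ∉ I, ‖m n‖ ≤ w) (f : H) :
    ∃ s, HasSum (fun n => (m n * ⟪ψ n, f⟫_ℂ) • φ n) s ∧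
      (ε * Real.sqrt Aφ * Real.sqrt Aψ - w * Real.sqrt Bφ * Real.sqrt Bψ) * ‖f‖ ≤ ‖s‖ := by
  obtain ⟨s₁, hs₁, h₁⟩ := hφ1.exists_multiplier_lower_bound hψ1 hAφ hAψ hε
    (fun n => hεm n n.2) (fun n => hmC n n.2) f
  obtain ⟨s₂, hs₂, h₂⟩ := hφ2.exists_multiplier_norm_le hψ2 hw (fun n => hmw n n.2) f
  refine ⟨s₁ + s₂, HasSum.add_compl (f := fun n => (m n * ⟪ψ n, f⟫_ℂ) • φ n) hs₁ hs₂, ?_⟩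
  have := norm_sub_norm_le s₁ (-s₂)
  rw [sub_neg_eq_add, norm_neg] at this
  linarith

theorem adjoint_apply_eq_of_hasSum_multiplier {M : H →L[ℂ] H}
    (hM : ∀ f, HasSum (fun n => (m n * ⟪ψ n, f⟫_ℂ) • φ n) (M f)) {g t : H}
    (ht : HasSum (fun n => (conj (m n) * ⟪φ n, g⟫_ℂ) • ψ n) t) : (M†) g = t := by
  refine ext_inner_right ℂ fun f => ?_
  rw [ContinuousLinearMap.adjoint_inner_left, ← inner_conj_symm t f]
  refine ((innerSL ℂ g).hasSum (hM f)).unique ?_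
  convert ((innerSL ℂ f).hasSum ht).star using 1
  · ext n
    simp only [innerSL_apply_apply, inner_smul_right, star_mul', RCLike.star_def,
      RCLike.conj_conj, inner_conj_symm]
    ring
  · rfl

end Multiplier

theorem multiplier_bijective_of_riesz_part_general
    {H : Type*} [NormedAddCommGroup H] [InnerProductSpace ℂ H] [CompleteSpace H]
    (φ ψ : ℕ → H)
    (I : Set ℕ)
    (Aφ1 Aψ1 Bφ2 Bψ2 : ℝ) (hAφ1 : 0 < Aφ1) (hAψ1 : 0 < Aψ1)
    (hφ1 : ∃ B1 : ℝ, IsRieszBasisWith (fun n : I => φ n) Aφ1 B1)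
    (hψ1 : ∃ B1 : ℝ, IsRieszBasisWith (fun n : I => ψ n) Aψ1 B1)
    (hφ2 : IsBesselWith (fun n : {n : ℕ // n ∉ I} => φ n) Bφ2)
    (hψ2 : IsBesselWith (fun n : {n : ℕ // n ∉ I} => ψ n) Bψ2)
    (m : ℕ → ℂ) (hm : ∃ C : ℝ, ∀ n, ‖m n‖ ≤ C)
    (M : H →L[ℂ] H)
    (hM : ∀ f : H, HasSum (fun n => (m n * ⟪ψ n, f⟫_ℂ) • φ n) (M f))
    (hcond : (⨆ n : {n : ℕ // n ∉ I}, ‖m n‖) * Real.sqrt Bφ2 * Real.sqrt Bψ2 <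
      (⨅ n : I, ‖m n‖) * Real.sqrt Aφ1 * Real.sqrt Aψ1) :
    Function.Bijective M := by
  obtain ⟨_, hφ1⟩ := hφ1
  obtain ⟨_, hψ1⟩ := hψ1
  obtain ⟨C, hmC⟩ := hm
  set w := ⨆ n : {n : ℕ // n ∉ I}, ‖m n‖
  set ε := ⨅ n : I, ‖m n‖
  have hw : 0 ≤ w := Real.iSup_nonneg fun _ => norm_nonneg _
  have hmw : ∀ n ∉ I, ‖m n‖ ≤ w := fun n hn =>
    le_ciSup (f := fun n : {n : ℕ // n ∉ I} => ‖m n‖)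
      ⟨C, by rintro _ ⟨k, rfl⟩; exact hmC k⟩ ⟨n, hn⟩
  have hε : 0 ≤ ε := Real.iInf_nonneg fun _ => norm_nonneg _
  have hεm : ∀ n ∈ I, ε ≤ ‖m n‖ := fun n hn =>
    ciInf_le (f := fun n : I => ‖m n‖) ⟨0, by rintro _ ⟨k, rfl⟩; exact norm_nonneg _⟩ ⟨n, hn⟩
  refine M.bijective_of_lower_bound_of_adjoint (sub_pos.2 hcond) (fun f => ?_) (fun g => ?_)
  · obtain ⟨s, hs, hle⟩ := exists_multiplier_lower_bound_of_riesz_part hφ1 hψ1 hφ2 hψ2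
      hAφ1.le hAψ1.le hε hεm (fun n _ => hmC n) hw hmw f
    rwa [(hM f).unique hs]
  · obtain ⟨t, ht, hle⟩ := exists_multiplier_lower_bound_of_riesz_part (m := fun n => conj (m n))
      hψ1 hφ1 hψ2 hφ2 hAψ1.le hAφ1.le hε (by simpa using hεm) (by simpa using fun n _ => hmC n)
      hw (by simpa using hmw) g
    rw [adjoint_apply_eq_of_hasSum_multiplier hM ht]
    linarith

/-- if the frames `φ, ψ` contain Riesz bases (indexed by `I`) with lower
bounds `Aφ1, Aψ1`, the remainders are Bessel with bounds `Bφ2, Bψ2`, and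
`(sup_{n∉I}|m n|)·Bφ2^(1/2)·Bψ2^(1/2) < (inf_{n∈I}|m n|)·Aφ1^(1/2)·Aψ1^(1/2)`,
then the multiplier `M_{m,φ,ψ}` is bijective. -/
theorem multiplier_bijective_of_riesz_part
    {H : Type*} [NormedAddCommGroup H] [InnerProductSpace ℂ H] [CompleteSpace H]
    (φ ψ : ℕ → H)
    (hφframe : ∃ A B : ℝ, 0 < A ∧ IsFrameWith φ A B)
    (hψframe : ∃ A B : ℝ, 0 < A ∧ IsFrameWith ψ A B)
    (I : Set ℕ)
    (Aφ1 Aψ1 Bφ2 Bψ2 : ℝ) (hAφ1 : 0 < Aφ1) (hAψ1 : 0 < Aψ1)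
    (hφ1 : ∃ B1 : ℝ, IsRieszBasisWith (fun n : I => φ n) Aφ1 B1)
    (hψ1 : ∃ B1 : ℝ, IsRieszBasisWith (fun n : I => ψ n) Aψ1 B1)
    (hφ2 : IsBesselWith (fun n : {n : ℕ // n ∉ I} => φ n) Bφ2)
    (hψ2 : IsBesselWith (fun n : {n : ℕ // n ∉ I} => ψ n) Bψ2)
    (m : ℕ → ℂ) (hm : ∃ C : ℝ, ∀ n, ‖m n‖ ≤ C)
    (M : H →L[ℂ] H)
    (hM : ∀ f : H, HasSum (fun n => (m n * ⟪ψ n, f⟫_ℂ) • φ n) (M f))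
    (hcond : (⨆ n : {n : ℕ // n ∉ I}, ‖m n‖) * Real.sqrt Bφ2 * Real.sqrt Bψ2 <
      (⨅ n : I, ‖m n‖) * Real.sqrt Aφ1 * Real.sqrt Aψ1) :
    Function.Bijective M :=
  multiplier_bijective_of_riesz_part_general φ ψ I Aφ1 Aψ1 Bφ2 Bψ2 hAφ1 hAψ1 hφ1 hψ1 hφ2 hψ2 m hm M
    hM hcond
end

section
/- Let k ∈ ℕ, and let φ be a Parseval frame for H of the form φ_{(i−1)k+j} = α_j e_i^j for i ∈ ℕ, j = 1,…,k, where each α_j ∈ ℂ∖{0} and each {e_i^j : i ∈ ℕ} is an orthonormal basis of H. Let m ∈ ℓ^∞, l_1,…,l_k ∈ ℂ and λ ∈ ℂ. If Σ_{j=1}^k |α_j|² sup_{i∈ℕ} |m_{(i−1)k+j} − l_j| < |Σ_{j=1}^k |α_j|² l_j − λ|, then λ lies in the resolvent set of M_{m,φ,φ}. -/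
open scoped InnerProductSpace

/-- Summing over `ℕ × Fin k` fiberwise (finite second coordinate). -/
lemma hasSum_prod_fin {k : ℕ} {H : Type*} [AddCommMonoid H] [TopologicalSpace H]
    [ContinuousAdd H] (g : ℕ × Fin k → H) (t : Fin k → H)
    (h : ∀ j : Fin k, HasSum (fun i : ℕ => g (i, j)) (t j)) :
    HasSum g (∑ j : Fin k, t j) := by
  classical
  have hj : ∀ j : Fin k,
      HasSum (fun p : ℕ × Fin k => if p.2 = j then g (p.1, j) else 0) (t j) := by
    intro j
    have hinj : Function.Injective (fun i : ℕ => ((i, j) : ℕ × Fin k)) := by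
      intro a b hab; simpa using congrArg Prod.fst hab
    refine (Function.Injective.hasSum_iff hinj ?_).mp ?_
    · rintro ⟨i, j'⟩ hp
      have : j' ≠ j := by
        intro hjj; subst hjj; exact hp ⟨i, rfl⟩
      simp [this]
    · convert h j using 1
      funext i
      simp
  have := hasSum_sum (s := (Finset.univ : Finset (Fin k)))
    (f := fun j (p : ℕ × Fin k) => if p.2 = j then g (p.1, j) else 0)
    (a := t) (fun j _ => hj j)
  convert this using 1
  funext p
  simp

/-- Existence and norm bound for sums `∑ d i • ⟪b i, f⟫ • b i` with bounded coefficients. -/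
lemma exists_hasSum_smul_onb {H : Type*} [NormedAddCommGroup H] [InnerProductSpace ℂ H]
    [CompleteSpace H] (b : HilbertBasis ℕ ℂ H) (d : ℕ → ℂ) (K : ℝ)
    (hd : ∀ i, ‖d i‖ ≤ K) (f : H) :
    ∃ v : H, HasSum (fun i : ℕ => (d i * ⟪b i, f⟫_ℂ) • b i) v ∧ ‖v‖ ≤ K * ‖f‖ := by
  have hK0 : 0 ≤ K := le_trans (norm_nonneg (d 0)) (hd 0)
  set c : ℕ → ℂ := fun i => d i * ⟪b i, f⟫_ℂ with hc
  have hsq : ∀ i, ‖c i‖ ^ 2 ≤ K ^ 2 * ‖⟪b i, f⟫_ℂ‖ ^ 2 := by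
    intro i
    have : ‖c i‖ = ‖d i‖ * ‖⟪b i, f⟫_ℂ‖ := norm_mul _ _
    rw [this, mul_pow]
    exact mul_le_mul_of_nonneg_right (pow_le_pow_left₀ (norm_nonneg _) (hd i) 2)
      (by positivity)
  have hsummable : Summable fun i => ‖c i‖ ^ 2 := by
    refine Summable.of_nonneg_of_le (fun i => by positivity) hsq ?_
    exact (b.orthonormal.inner_products_summable f).mul_left _
  have hmem : Memℓp c 2 := by
    apply memℓp_gen
    have : (2 : ENNReal).toReal = 2 := by norm_num
    rw [this]
    simpa [Real.rpow_natCast] using hsummable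
  set F : lp (fun _ : ℕ => ℂ) 2 := ⟨c, hmem⟩ with hF
  refine ⟨b.repr.symm F, ?_, ?_⟩
  · simpa using b.hasSum_repr_symm F
  · have hsum : HasSum (fun i => c i • b i) (b.repr.symm F) := by
      simpa using b.hasSum_repr_symm F
    have htend := hsum.tendsto_sum_nat
    -- use general filter: partial sums over finsets
    have htends : Filter.Tendsto (fun s : Finset ℕ => ‖∑ i ∈ s, c i • b i‖)
        Filter.atTop (nhds ‖b.repr.symm F‖) := (continuous_norm.tendsto _).comp hsum
    refine le_of_tendsto htends (Filter.Eventually.of_forall fun s => ?_)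
    have hnormsq : ‖∑ i ∈ s, c i • b i‖ ^ 2 = ∑ i ∈ s, ‖c i‖ ^ 2 := by
      have := b.orthonormal.inner_sum c c s
      have h2 : (⟪∑ i ∈ s, c i • b i, ∑ i ∈ s, c i • b i⟫_ℂ) =
          ∑ i ∈ s, (starRingEnd ℂ) (c i) * c i := this
      have h3 : (‖∑ i ∈ s, c i • b i‖ : ℝ) ^ 2 =
          RCLike.re (⟪∑ i ∈ s, c i • b i, ∑ i ∈ s, c i • b i⟫_ℂ) := by
        rw [← @inner_self_eq_norm_sq ℂ]
      rw [h3, h2, map_sum]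
      refine Finset.sum_congr rfl fun i _ => ?_
      rw [RCLike.conj_mul]
      simp [← Complex.ofReal_pow]
    have hle : ‖∑ i ∈ s, c i • b i‖ ^ 2 ≤ (K * ‖f‖) ^ 2 := by
      rw [hnormsq]
      calc ∑ i ∈ s, ‖c i‖ ^ 2 ≤ ∑ i ∈ s, K ^ 2 * ‖⟪b i, f⟫_ℂ‖ ^ 2 :=
            Finset.sum_le_sum fun i _ => hsq i
        _ = K ^ 2 * ∑ i ∈ s, ‖⟪b i, f⟫_ℂ‖ ^ 2 := by rw [Finset.mul_sum]
        _ ≤ K ^ 2 * ‖f‖ ^ 2 := by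
            gcongr
            exact b.orthonormal.sum_inner_products_le f
        _ = (K * ‖f‖) ^ 2 := by ring
    exact (pow_le_pow_iff_left₀ (norm_nonneg _) (by positivity) two_ne_zero).mp hle

/-- for a Parseval frame which is a union of `k` multiples of orthonormal
bases (indexed by `ℕ × Fin k`), if
`Σ_j |α_j|² sup_i |m (i,j) − l j| < |Σ_j |α_j|² l_j − λ|` then `λ` is in the resolvent set
of `M_{m,φ,φ}`. -/
theorem resolvent_multiplier_union_of_onb
    {H : Type*} [NormedAddCommGroup H] [InnerProductSpace ℂ H] [CompleteSpace H]
    (k : ℕ) (hk : 0 < k)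
    (e : Fin k → HilbertBasis ℕ ℂ H)
    (α : Fin k → ℂ) (hα : ∀ j, α j ≠ 0)
    (φ : ℕ × Fin k → H) (hφdef : ∀ (i : ℕ) (j : Fin k), φ (i, j) = α j • (e j) i)
    (hparseval : ∀ f : H, HasSum (fun p : ℕ × Fin k => ‖⟪φ p, f⟫_ℂ‖ ^ 2) (‖f‖ ^ 2))
    (m : ℕ × Fin k → ℂ) (hm : ∃ C : ℝ, ∀ p, ‖m p‖ ≤ C)
    (l : Fin k → ℂ) (lam : ℂ)
    (M : H →L[ℂ] H)
    (hM : ∀ f : H, HasSum (fun p : ℕ × Fin k => (m p * ⟪φ p, f⟫_ℂ) • φ p) (M f))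
    (hcond : ∑ j : Fin k, ‖α j‖ ^ 2 * (⨆ i : ℕ, ‖m (i, j) - l j‖) <
      ‖(∑ j : Fin k, (‖α j‖ ^ 2 : ℂ) * l j) - lam‖) :
    lam ∈ resolventSet ℂ M := by
  classical
  obtain ⟨C, hC⟩ := hm
  set K : Fin k → ℝ := fun j => ⨆ i : ℕ, ‖m (i, j) - l j‖ with hKdef
  have hbdd : ∀ j : Fin k, BddAbove (Set.range fun i : ℕ => ‖m (i, j) - l j‖) := by
    intro j
    refine ⟨C + ‖l j‖, ?_⟩
    rintro x ⟨i, rfl⟩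
    calc ‖m (i, j) - l j‖ ≤ ‖m (i, j)‖ + ‖l j‖ := norm_sub_le _ _
      _ ≤ C + ‖l j‖ := by gcongr; exact hC _
  have hKle : ∀ (j : Fin k) (i : ℕ), ‖m (i, j) - l j‖ ≤ K j := fun j i => le_ciSup (hbdd j) i
  have hK0 : ∀ j, 0 ≤ K j := fun j => le_trans (norm_nonneg _) (hKle j 0)
  set c : ℂ := ∑ j : Fin k, (‖α j‖ ^ 2 : ℂ) * l j with hcdef
  set S : ℝ := ∑ j : Fin k, ‖α j‖ ^ 2 * K j with hSdef
  have hS0 : 0 ≤ S := Finset.sum_nonneg fun j _ => mul_nonneg (by positivity) (hK0 j)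
  have key : ∀ f : H, ‖M f - c • f‖ ≤ S * ‖f‖ := by
    intro f
    -- the constant-symbol part sums to `c • f` fiberwise
    have hconst : ∀ j : Fin k,
        HasSum (fun i : ℕ => (l j * ⟪φ (i, j), f⟫_ℂ) • φ (i, j))
          (((‖α j‖ ^ 2 : ℂ) * l j) • f) := by
      intro j
      have hbase : HasSum (fun i : ℕ => ⟪(e j) i, f⟫_ℂ • (e j) i) f := by
        have := (e j).hasSum_repr f
        simpa [HilbertBasis.repr_apply_apply] using this
      have := hbase.const_smul ((‖α j‖ ^ 2 : ℂ) * l j)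
      refine HasSum.congr_fun this fun i => ?_
      rw [hφdef, inner_smul_left, smul_smul, smul_smul]
      congr 1
      have : (starRingEnd ℂ) (α j) * α j = (‖α j‖ ^ 2 : ℂ) := RCLike.conj_mul (α j)
      rw [← this]; ring
    have hconstsum : HasSum (fun p : ℕ × Fin k => (l p.2 * ⟪φ p, f⟫_ℂ) • φ p) (c • f) := by
      have := hasSum_prod_fin (fun p : ℕ × Fin k => (l p.2 * ⟪φ p, f⟫_ℂ) • φ p)
        (fun j => ((‖α j‖ ^ 2 : ℂ) * l j) • f) (fun j => hconst j)
      rwa [← Finset.sum_smul, ← hcdef] at this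
    -- the perturbation part
    have hpiece : ∀ j : Fin k, ∃ v : H,
        HasSum (fun i : ℕ => ((m (i, j) - l j) * ⟪φ (i, j), f⟫_ℂ) • φ (i, j)) v ∧
          ‖v‖ ≤ ‖α j‖ ^ 2 * K j * ‖f‖ := by
      intro j
      obtain ⟨v, hv, hvn⟩ := exists_hasSum_smul_onb (e j)
        (fun i => (m (i, j) - l j) * ((starRingEnd ℂ) (α j) * α j)) (K j * ‖α j‖ ^ 2)
        (fun i => by
          rw [norm_mul]
          have h1 : ‖(starRingEnd ℂ) (α j) * α j‖ = ‖α j‖ ^ 2 := by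
            rw [norm_mul, RCLike.norm_conj, sq]
          rw [h1]
          exact mul_le_mul_of_nonneg_right (hKle j i) (by positivity)) f
      refine ⟨v, HasSum.congr_fun hv fun i => ?_, by
        calc ‖v‖ ≤ K j * ‖α j‖ ^ 2 * ‖f‖ := hvn
          _ = ‖α j‖ ^ 2 * K j * ‖f‖ := by ring⟩
      rw [hφdef, inner_smul_left, smul_smul]
      congr 1
      ring
    choose v hv hvn using hpiece
    have hdiffsum : HasSum
        (fun p : ℕ × Fin k => ((m p - l p.2) * ⟪φ p, f⟫_ℂ) • φ p) (∑ j : Fin k, v j) :=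
      hasSum_prod_fin _ _ hv
    have hMc : HasSum
        (fun p : ℕ × Fin k => ((m p - l p.2) * ⟪φ p, f⟫_ℂ) • φ p) (M f - c • f) := by
      have := (hM f).sub hconstsum
      refine HasSum.congr_fun this fun p => ?_
      rw [sub_mul, sub_smul]
    have heq : M f - c • f = ∑ j : Fin k, v j := hMc.unique hdiffsum
    rw [heq]
    calc ‖∑ j : Fin k, v j‖ ≤ ∑ j : Fin k, ‖v j‖ := norm_sum_le _ _
      _ ≤ ∑ j : Fin k, ‖α j‖ ^ 2 * K j * ‖f‖ := Finset.sum_le_sum fun j _ => hvn j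
      _ = S * ‖f‖ := by rw [hSdef, Finset.sum_mul]
  -- now conclude invertibility
  rw [spectrum.mem_resolventSet_iff]
  have hclam : S < ‖lam - c‖ := by rwa [norm_sub_rev] at hcond
  have hne : lam - c ≠ 0 := by
    intro h
    rw [h, norm_zero] at hclam
    exact absurd hclam (not_lt.mpr hS0)
  set E : H →L[ℂ] H := M - c • 1 with hEdef
  have hEnorm : ‖E‖ ≤ S := by
    refine ContinuousLinearMap.opNorm_le_bound E hS0 fun f => ?_
    simpa [hEdef, ContinuousLinearMap.sub_apply, ContinuousLinearMap.smul_apply,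
      ContinuousLinearMap.one_apply] using key f
  have hu : ‖(lam - c)⁻¹ • E‖ < 1 := by
    rw [norm_smul, norm_inv]
    have hpos : 0 < ‖lam - c‖ := norm_pos_iff.mpr hne
    rw [inv_mul_lt_one₀ hpos]
    exact lt_of_le_of_lt hEnorm hclam
  have hfactor : algebraMap ℂ (H →L[ℂ] H) (lam - c) * (1 - (lam - c)⁻¹ • E) =
      algebraMap ℂ (H →L[ℂ] H) lam - M := by
    have h1 : ((lam - c) : ℂ) • ((lam - c)⁻¹ • E) = E := by
      rw [smul_smul, mul_inv_cancel₀ hne, one_smul]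
    calc algebraMap ℂ (H →L[ℂ] H) (lam - c) * (1 - (lam - c)⁻¹ • E)
        = (lam - c) • (1 - (lam - c)⁻¹ • E) := by
          rw [Algebra.algebraMap_eq_smul_one, smul_one_mul]
      _ = (lam - c) • (1 : H →L[ℂ] H) - E := by rw [smul_sub, h1]
      _ = algebraMap ℂ (H →L[ℂ] H) lam - M := by
          rw [Algebra.algebraMap_eq_smul_one, hEdef, sub_smul]
          abel
  rw [← hfactor]
  exact ((isUnit_iff_ne_zero.mpr hne).map (algebraMap ℂ (H →L[ℂ] H))).mul
    (Units.oneSub _ hu).isUnit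
end

section
/- Let k ∈ ℕ, and let φ be a Parseval frame for H of the form φ_{(i−1)k+j} = α_j e_i^j for i ∈ ℕ, j = 1,…,k, where α_j ∈ ℂ∖{0} and each {e_i^j : i ∈ ℕ} is an orthonormal basis of H. If m ∈ ℓ^∞ is a real sequence, then the spectrum of M_{m,φ,φ} is contained in the interval [Σ_{j=1}^k |α_j|² inf_{i∈ℕ} m_{(i−1)k+j}, Σ_{j=1}^k |α_j|² sup_{i∈ℕ} m_{(i−1)k+j}]. -/
/-!
Since the symbol is real, `M` is self-adjoint, and its quadratic form is
`re ⟪M x, x⟫ = Σ_{i,j} m (i, j) |⟪φ (i, j), x⟫|²`. Bounding `m (i, j)` below and above by the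
infimum and supremum of the `j`-th block and applying Parseval's identity to each orthonormal
basis `e j` squeezes this form between `L ‖x‖²` and `U ‖x‖²`, where `L` and `U` are the two
endpoints. In the Loewner order this says `L ≤ M ≤ U`, which confines the spectrum of the
self-adjoint operator `M` to `[L, U]`.
-/

open scoped InnerProductSpace

theorem spectrum_subset_ofReal_image_Icc {A : Type*} [CStarAlgebra A] [PartialOrder A]
    [StarOrderedRing A] {a : A} {r s : ℝ} (hr : algebraMap ℝ A r ≤ a)
    (hs : a ≤ algebraMap ℝ A s) :
    spectrum ℂ a ⊆ (fun t : ℝ => (t : ℂ)) '' Set.Icc r s := by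
  have ha : IsSelfAdjoint a := by
    simpa using (IsSelfAdjoint.of_nonneg (sub_nonneg.mpr hr)).add (.algebraMap A (.all r))
  intro z hz
  have hre : z.re ∈ spectrum ℝ a := by
    rwa [← spectrum.algebraMap_mem_iff ℂ, Complex.coe_algebraMap, ← ha.mem_spectrum_eq_re hz]
  exact ⟨z.re, ⟨(algebraMap_le_iff_le_spectrum ha).mp hr _ hre,
    (le_algebraMap_iff_spectrum_le ha).mp hs _ hre⟩, (ha.mem_spectrum_eq_re hz).symm⟩

theorem HasSum.of_fiberwise_fintype {α β γ : Type*} [AddCommMonoid α] [TopologicalSpace α]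
    [ContinuousAdd α] [Fintype γ] {f : β × γ → α} {a : γ → α}
    (h : ∀ c, HasSum (fun b => f (b, c)) (a c)) : HasSum f (∑ c, a c) := by
  have hfiber (c : γ) : HasSum (Function.extend (·, c) (fun b => f (b, c)) 0) (a c) :=
    (hasSum_extend_zero (Prod.mk_left_injective c)).mpr (h c)
  convert hasSum_sum fun c _ => hfiber c with ⟨b, c⟩
  rw [Finset.sum_eq_single_of_mem c (Finset.mem_univ _)]
  · exact ((Prod.mk_left_injective c).extend_apply (fun b => f (b, c)) 0 b).symm
  · rintro c' - hc'
    refine Function.extend_apply' _ _ _ ?_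
    rintro ⟨b', hb'⟩
    exact hc' (congrArg Prod.snd hb')

section InnerProductSpace

variable {H : Type*} [NormedAddCommGroup H] [InnerProductSpace ℂ H]

namespace ContinuousLinearMap

variable [CompleteSpace H]

theorem algebraMap_le_of_forall_le_re_inner {T : H →L[ℂ] H} (hT : IsSelfAdjoint T) {r : ℝ}
    (h : ∀ x, r * ‖x‖ ^ 2 ≤ (⟪T x, x⟫_ℂ).re) : algebraMap ℝ (H →L[ℂ] H) r ≤ T := by
  refine (le_def _ _).mpr (isPositive_def'.mpr ⟨hT.sub (.algebraMap _ (.all r)), fun x => ?_⟩)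
  simpa [reApplyInnerSelf, inner_sub_left, ← Complex.coe_smul, inner_smul_left,
    inner_self_eq_norm_sq_to_K, ← Complex.ofReal_pow] using h x

theorem le_algebraMap_of_forall_re_inner_le {T : H →L[ℂ] H} (hT : IsSelfAdjoint T) {s : ℝ}
    (h : ∀ x, (⟪T x, x⟫_ℂ).re ≤ s * ‖x‖ ^ 2) : T ≤ algebraMap ℝ (H →L[ℂ] H) s := by
  refine (le_def _ _).mpr
    (isPositive_def'.mpr ⟨(IsSelfAdjoint.algebraMap _ (.all s)).sub hT, fun x => ?_⟩)
  simpa [reApplyInnerSelf, inner_sub_left, ← Complex.coe_smul, inner_smul_left,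
    inner_self_eq_norm_sq_to_K, ← Complex.ofReal_pow] using h x

end ContinuousLinearMap

theorem HilbertBasis.hasSum_norm_inner_sq {ι : Type*} (b : HilbertBasis ι ℂ H) (x : H) :
    HasSum (fun i => ‖⟪b i, x⟫_ℂ‖ ^ 2) (‖x‖ ^ 2) := by
  simpa [b.repr_apply_apply] using lp.hasSum_norm (by norm_num) (b.repr x)

theorem hasSum_mul_norm_inner_smul_hilbertBasis_sq {ι κ : Type*} [Fintype κ]
    (e : κ → HilbertBasis ι ℂ H) (α : κ → ℂ) (c : κ → ℝ) (x : H) :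
    HasSum (fun p : ι × κ => c p.2 * ‖⟪α p.2 • e p.2 p.1, x⟫_ℂ‖ ^ 2)
      ((∑ j, ‖α j‖ ^ 2 * c j) * ‖x‖ ^ 2) := by
  rw [Finset.sum_mul]
  refine HasSum.of_fiberwise_fintype fun j => ?_
  have hterm (i : ι) :
      c j * ‖⟪α j • e j i, x⟫_ℂ‖ ^ 2 = c j * ‖α j‖ ^ 2 * ‖⟪e j i, x⟫_ℂ‖ ^ 2 := by
    rw [inner_smul_left, norm_mul, Complex.norm_conj]
    ring
  rw [mul_comm (‖α j‖ ^ 2)]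
  simpa only [hterm] using ((e j).hasSum_norm_inner_sq x).mul_left (c j * ‖α j‖ ^ 2)

section Multiplier

variable {ι : Type*} {φ : ι → H} {m : ι → ℝ} {M : H →L[ℂ] H}

theorem hasSum_inner_multiplier
    (hM : ∀ f, HasSum (fun p => ((m p : ℂ) * ⟪φ p, f⟫_ℂ) • φ p) (M f)) (f g : H) :
    HasSum (fun p => (m p : ℂ) * ⟪φ p, f⟫_ℂ * ⟪g, φ p⟫_ℂ) ⟪g, M f⟫_ℂ := by
  simpa only [innerSL_apply_apply, inner_smul_right] using (hM f).mapL (innerSL ℂ g)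

theorem isSelfAdjoint_multiplier [CompleteSpace H]
    (hM : ∀ f, HasSum (fun p => ((m p : ℂ) * ⟪φ p, f⟫_ℂ) • φ p) (M f)) : IsSelfAdjoint M := by
  refine ContinuousLinearMap.isSelfAdjoint_iff_isSymmetric.mpr fun f g => ?_
  have hconj := (hasSum_inner_multiplier hM f g).star
  simp only [star_mul', Complex.star_def, inner_conj_symm, Complex.conj_ofReal] at hconj
  refine hconj.unique ?_
  simpa only [mul_right_comm, ContinuousLinearMap.coe_coe] using hasSum_inner_multiplier hM g f

theorem hasSum_re_inner_multiplier_self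
    (hM : ∀ f, HasSum (fun p => ((m p : ℂ) * ⟪φ p, f⟫_ℂ) • φ p) (M f)) (x : H) :
    HasSum (fun p => m p * ‖⟪φ p, x⟫_ℂ‖ ^ 2) (⟪M x, x⟫_ℂ).re := by
  have hterm (p : ι) :
      ((m p : ℂ) * ⟪φ p, x⟫_ℂ * ⟪x, φ p⟫_ℂ).re = m p * ‖⟪φ p, x⟫_ℂ‖ ^ 2 := by
    rw [← inner_conj_symm x (φ p), mul_assoc, Complex.mul_conj, Complex.normSq_eq_norm_sq]
    norm_cast
  rw [← inner_conj_symm, Complex.conj_re]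
  simpa only [Complex.reCLM_apply, hterm] using (hasSum_inner_multiplier hM x x).mapL Complex.reCLM

end Multiplier

end InnerProductSpace

theorem spectrum_multiplier_union_of_onb_real_symbol_general
    {H : Type*} [NormedAddCommGroup H] [InnerProductSpace ℂ H] [CompleteSpace H]
    (k : ℕ)
    (e : Fin k → HilbertBasis ℕ ℂ H)
    (α : Fin k → ℂ)
    (φ : ℕ × Fin k → H) (hφdef : ∀ (i : ℕ) (j : Fin k), φ (i, j) = α j • (e j) i)
    (m : ℕ × Fin k → ℝ) (hm : ∃ C : ℝ, ∀ p, |m p| ≤ C)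
    (M : H →L[ℂ] H)
    (hM : ∀ f : H, HasSum (fun p : ℕ × Fin k => ((m p : ℂ) * ⟪φ p, f⟫_ℂ) • φ p) (M f)) :
    spectrum ℂ M ⊆
      (fun r : ℝ => (r : ℂ)) ''
        Set.Icc (∑ j : Fin k, ‖α j‖ ^ 2 * ⨅ i : ℕ, m (i, j))
          (∑ j : Fin k, ‖α j‖ ^ 2 * ⨆ i : ℕ, m (i, j)) := by
  obtain rfl : φ = fun p => α p.2 • e p.2 p.1 := funext fun p => hφdef p.1 p.2
  obtain ⟨C, hC⟩ := hm
  have hbdd (j : Fin k) :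
      BddBelow (Set.range fun i => m (i, j)) ∧ BddAbove (Set.range fun i => m (i, j)) :=
    ⟨⟨-C, by rintro _ ⟨i, rfl⟩; exact neg_le_of_abs_le (hC _)⟩,
      ⟨C, by rintro _ ⟨i, rfl⟩; exact le_of_abs_le (hC _)⟩⟩
  have hM_sa := isSelfAdjoint_multiplier hM
  apply spectrum_subset_ofReal_image_Icc
  · refine ContinuousLinearMap.algebraMap_le_of_forall_le_re_inner hM_sa fun x => ?_
    refine hasSum_le (fun p => ?_) (hasSum_mul_norm_inner_smul_hilbertBasis_sq e α _ x)
      (hasSum_re_inner_multiplier_self hM x)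
    exact mul_le_mul_of_nonneg_right (ciInf_le (hbdd p.2).1 p.1) (sq_nonneg _)
  · refine ContinuousLinearMap.le_algebraMap_of_forall_re_inner_le hM_sa fun x => ?_
    refine hasSum_le (fun p => ?_) (hasSum_re_inner_multiplier_self hM x)
      (hasSum_mul_norm_inner_smul_hilbertBasis_sq e α _ x)
    exact mul_le_mul_of_nonneg_right (le_ciSup (hbdd p.2).2 p.1) (sq_nonneg _)

/-- for a Parseval frame which is a union of `k` multiples of orthonormal
bases and a real bounded symbol, the spectrum of `M_{m,φ,φ}` lies in the interval
`[Σ_j |α_j|² inf_i m (i,j), Σ_j |α_j|² sup_i m (i,j)]`. -/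
theorem spectrum_multiplier_union_of_onb_real_symbol
    {H : Type*} [NormedAddCommGroup H] [InnerProductSpace ℂ H] [CompleteSpace H]
    (k : ℕ) (hk : 0 < k)
    (e : Fin k → HilbertBasis ℕ ℂ H)
    (α : Fin k → ℂ) (hα : ∀ j, α j ≠ 0)
    (φ : ℕ × Fin k → H) (hφdef : ∀ (i : ℕ) (j : Fin k), φ (i, j) = α j • (e j) i)
    (hparseval : ∀ f : H, HasSum (fun p : ℕ × Fin k => ‖⟪φ p, f⟫_ℂ‖ ^ 2) (‖f‖ ^ 2))
    (m : ℕ × Fin k → ℝ) (hm : ∃ C : ℝ, ∀ p, |m p| ≤ C)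
    (M : H →L[ℂ] H)
    (hM : ∀ f : H, HasSum (fun p : ℕ × Fin k => ((m p : ℂ) * ⟪φ p, f⟫_ℂ) • φ p) (M f)) :
    spectrum ℂ M ⊆
      (fun r : ℝ => (r : ℂ)) ''
        Set.Icc (∑ j : Fin k, ‖α j‖ ^ 2 * ⨅ i : ℕ, m (i, j))
          (∑ j : Fin k, ‖α j‖ ^ 2 * ⨆ i : ℕ, m (i, j)) :=
  spectrum_multiplier_union_of_onb_real_symbol_general k e α φ hφdef m hm M hM
end
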